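/- arXiv:1201.6219 — 6 statements merged into one kernel-verified Lean document; each statement's English description precedes it below -/
import Mathlib

section
/- Let n ≥ 1, let h be a nondegenerate Hermitian n×n matrix, and let w₁, w₂ ∈ ℤ with w₁ + w₂ = −n. Let U ⊆ ℂ^{n+2} be an open set with λ·U = U for all λ ∈ ℂ∖{0}, containing the point φ(z,σ) := (1, z¹, …, zⁿ, −½·Σ_a z^a z_a + i·σ) (where z_b := Σ_a h_{āb}·conj(z^a)). Let f : U → ℂ be smooth (in the real sense) and bihomogeneous of bidegree (w₁,w₂), i.e. f(λ·u) = λ^{w₁}·conj(λ)^{w₂}·f(u) for all λ ∈ ℂ∖{0} and u ∈ U. Set F(z,σ) := f(φ(z,σ)) for (z,σ) ∈ ℂⁿ×ℝ, and define first-order operators on smooth functions G : ℂⁿ×ℝ → ℂ by ∂_a G := (Wirtinger derivative of G in z^a) + (i/2)·z_a·∂_σ G and ∂_b̄ G := (conjugate Wirtinger derivative of G in z^b) − (i/2)·conj(z_b)·∂_σ G. Then at every point (z,σ): (Δ̃f)(φ(z,σ)) = ½·Σ_{a,b} (h^{-1})_{ab}·(∂_a ∂_b̄ F + ∂_b̄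 ∂_a F)(z,σ) + (i·(w₁−w₂)/2)·∂_σ F(z,σ). In other words, the ambient Laplacian induces the CR sub-Laplacian on the hyperquadric. -/
open scoped ComplexConjugate BigOperators Pointwise

noncomputable section

/-- Index set for the coordinates `(z⁰, z¹, …, zⁿ, z^∞)` of `ℂ^{n+2}`:
`Sum.inl ()` is the index `0`, `Sum.inr (Sum.inl a)` is the index `a ∈ {1, …, n}`, and
`Sum.inr (Sum.inr ())` is the index `∞`. -/
abbrev AmbIdx (n : ℕ) := Unit ⊕ (Fin n ⊕ Unit)

/-- The ambient space `ℂ^{n+2}`. -/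
abbrev Amb (n : ℕ) := AmbIdx n → ℂ

/-- The matrix `G` of the ambient Hermitian metric
`g(u,v) = conj(u⁰)·v^∞ + conj(u^∞)·v⁰ + Σ_{a,b} h_{āb}·conj(u^a)·v^b`, so that
`g(u,v) = Σ_{A,B} conj(u^A)·G_{AB}·v^B`. -/
def ambG {n : ℕ} (h : Matrix (Fin n) (Fin n) ℂ) : Matrix (AmbIdx n) (AmbIdx n) ℂ :=
  Matrix.of fun A B =>
    match A, B with
    | Sum.inl _, Sum.inr (Sum.inr _) => 1
    | Sum.inr (Sum.inr _), Sum.inl _ => 1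
    | Sum.inr (Sum.inl a), Sum.inr (Sum.inl b) => h a b
    | _, _ => 0

/-- The holomorphic Wirtinger derivative `∂_A f = ½(∂f/∂x^A − i·∂f/∂y^A)` of a smooth
(in the real sense) function `f : ℂ^{n+2} → ℂ` at `z`. -/
def wirt {n : ℕ} (f : Amb n → ℂ) (A : AmbIdx n) (z : Amb n) : ℂ :=
  (1 / 2) * (fderiv ℝ f z (Pi.single A 1) - Complex.I * fderiv ℝ f z (Pi.single A Complex.I))

/-- The antiholomorphic Wirtinger derivative `∂_Ā f = ½(∂f/∂x^A + i·∂f/∂y^A)`. -/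
def wirtBar {n : ℕ} (f : Amb n → ℂ) (A : AmbIdx n) (z : Amb n) : ℂ :=
  (1 / 2) * (fderiv ℝ f z (Pi.single A 1) + Complex.I * fderiv ℝ f z (Pi.single A Complex.I))

/-- The ambient Laplacian `Δ̃f = Σ_{A,B} (G⁻¹)_{BA}·∂_A ∂_B̄ f`, with the index
convention chosen so that `Δ̃f = Σ_A ∂_A ∂^A f` where `∂^A f = Σ_C (G⁻¹)_{AC}·∂_C̄ f`. -/
def ambLap {n : ℕ} (h : Matrix (Fin n) (Fin n) ℂ) (f : Amb n → ℂ) (z : Amb n) : ℂ :=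
  ∑ A : AmbIdx n, ∑ B : AmbIdx n, (ambG h)⁻¹ A B * wirt (wirtBar f B) A z

/-- `z_b := Σ_a h_{āb}·conj(z^a)` for `z ∈ ℂⁿ`. -/
def lowZ {n : ℕ} (h : Matrix (Fin n) (Fin n) ℂ) (z : Fin n → ℂ) (b : Fin n) : ℂ :=
  ∑ a : Fin n, h a b * conj (z a)

/-- The embedding `φ(z,σ) = (1, z¹, …, zⁿ, −½·Σ_a z^a z_a + i·σ)` of the hyperquadric. -/
def phiEmb {n : ℕ} (h : Matrix (Fin n) (Fin n) ℂ) (z : Fin n → ℂ) (σ : ℝ) : Amb n :=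
  fun A =>
    match A with
    | Sum.inl _ => 1
    | Sum.inr (Sum.inl a) => z a
    | Sum.inr (Sum.inr _) =>
        -(1 / 2) * (∑ a : Fin n, z a * lowZ h z a) + Complex.I * (σ : ℂ)

/-- A point of the hyperquadric `M`, coordinatized by `(z, σ) ∈ ℂⁿ × ℝ`. -/
abbrev BasePt (n : ℕ) := (Fin n → ℂ) × ℝ

/-- The Wirtinger derivative of `G : ℂⁿ × ℝ → ℂ` in the coordinate `z^a`. -/
def dZ {n : ℕ} (a : Fin n) (G : BasePt n → ℂ) (p : BasePt n) : ℂ :=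
  (1 / 2) * (fderiv ℝ G p (Pi.single a 1, 0) -
    Complex.I * fderiv ℝ G p (Pi.single a Complex.I, 0))

/-- The conjugate Wirtinger derivative of `G : ℂⁿ × ℝ → ℂ` in the coordinate `z^a`. -/
def dZBar {n : ℕ} (a : Fin n) (G : BasePt n → ℂ) (p : BasePt n) : ℂ :=
  (1 / 2) * (fderiv ℝ G p (Pi.single a 1, 0) +
    Complex.I * fderiv ℝ G p (Pi.single a Complex.I, 0))

/-- `∂_σ G`. -/
def dSigma {n : ℕ} (G : BasePt n → ℂ) (p : BasePt n) : ℂ :=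
  fderiv ℝ G p (0, 1)

/-- The first-order operator `∂_a G = (Wirtinger derivative in z^a) + (i/2)·z_a·∂_σ G`. -/
def opD {n : ℕ} (h : Matrix (Fin n) (Fin n) ℂ) (a : Fin n) (G : BasePt n → ℂ)
    (p : BasePt n) : ℂ :=
  dZ a G p + (Complex.I / 2) * lowZ h p.1 a * dSigma G p

/-- The first-order operator
`∂_b̄ G = (conjugate Wirtinger derivative in z^b) − (i/2)·conj(z_b)·∂_σ G`. -/
def opDBar {n : ℕ} (h : Matrix (Fin n) (Fin n) ℂ) (b : Fin n) (G : BasePt n → ℂ)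
    (p : BasePt n) : ℂ :=
  dZBar b G p - (Complex.I / 2) * conj (lowZ h p.1 b) * dSigma G p

namespace CRaux

open Complex ContinuousLinearMap

variable {n : ℕ}

/-- index 0 -/
abbrev i0 (n : ℕ) : AmbIdx n := Sum.inl ()
/-- index a -/
abbrev ia {n : ℕ} (a : Fin n) : AmbIdx n := Sum.inr (Sum.inl a)
/-- index ∞ -/
abbrev ii (n : ℕ) : AmbIdx n := Sum.inr (Sum.inr ())

def eV {n : ℕ} (A : AmbIdx n) : Amb n := Pi.single A 1
def iV {n : ℕ} (A : AmbIdx n) : Amb n := Pi.single A Complex.I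

/-- Wirtinger combination of a real-linear functional. -/
def wT (T : Amb n →L[ℝ] ℂ) (A : AmbIdx n) : ℂ :=
  (1 / 2) * (T (eV A) - Complex.I * T (iV A))

def wbT (T : Amb n →L[ℝ] ℂ) (A : AmbIdx n) : ℂ :=
  (1 / 2) * (T (eV A) + Complex.I * T (iV A))

lemma wirt_eq_wT (f : Amb n → ℂ) (A : AmbIdx n) (z : Amb n) :
    wirt f A z = wT (fderiv ℝ f z) A := rfl

lemma wirtBar_eq_wbT (f : Amb n → ℂ) (A : AmbIdx n) (z : Amb n) :
    wirtBar f A z = wbT (fderiv ℝ f z) A := rfl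

lemma single_decomp (A : AmbIdx n) (c : ℂ) :
    Pi.single A c = c.re • eV A + c.im • iV A := by
  funext B
  by_cases hB : B = A
  · subst hB
    simp only [eV, iV, Pi.add_apply, Pi.smul_apply, Pi.single_eq_same, Complex.real_smul,
      mul_one]
    exact (Complex.re_add_im c).symm
  · simp [eV, iV, Pi.single_apply, hB]

lemma clm_single (T : Amb n →L[ℝ] ℂ) (A : AmbIdx n) (c : ℂ) :
    T (Pi.single A c) = c * wT T A + conj c * wbT T A := by
  have h1 : (c : ℂ) = (c.re : ℂ) + (c.im : ℂ) * Complex.I := (Complex.re_add_im c).symm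
  have h2 : conj c = (c.re : ℂ) - (c.im : ℂ) * Complex.I := by
    simp [Complex.ext_iff]
  rw [single_decomp, map_add, T.map_smul, T.map_smul]
  simp only [wT, wbT, Complex.real_smul]
  linear_combination (-(T (eV A)) / 2 + Complex.I * T (iV A) / 2) * h1 +
    (-(T (eV A)) / 2 - Complex.I * T (iV A) / 2) * h2 +
    ((c.im : ℂ) * T (iV A)) * Complex.I_sq

lemma clm_eq_sum (T : Amb n →L[ℝ] ℂ) (u : Amb n) :
    T u = ∑ A : AmbIdx n, (u A * wT T A + conj (u A) * wbT T A) := by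
  conv_lhs => rw [show u = ∑ A : AmbIdx n, Pi.single A (u A) from (Finset.univ_sum_single u).symm]
  rw [map_sum]
  exact Finset.sum_congr rfl fun A _ => clm_single T A (u A)

lemma wT_combo (T₁ T₂ S : Amb n →L[ℝ] ℂ) (c d : ℂ) (A : AmbIdx n) :
    wT (T₁ - (c • T₂ + d • S)) A = wT T₁ A - (c * wT T₂ A + d * wT S A) := by
  simp [wT]; ring

lemma wbT_combo (T₁ T₂ S : Amb n →L[ℝ] ℂ) (c d : ℂ) (A : AmbIdx n) :
    wbT (T₁ - (c • T₂ + d • S)) A = wbT T₁ A - (c * wbT T₂ A + d * wbT S A) := by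
  simp [wbT]; ring

end CRaux
namespace CRaux

variable {n : ℕ}

lemma lowZ_add (h : Matrix (Fin n) (Fin n) ℂ) (z v : Fin n → ℂ) (b : Fin n) :
    lowZ h (z + v) b = lowZ h z b + lowZ h v b := by
  simp [lowZ, mul_add, Finset.sum_add_distrib]

lemma lowZ_smul_real (h : Matrix (Fin n) (Fin n) ℂ) (r : ℝ) (z : Fin n → ℂ) (b : Fin n) :
    lowZ h (r • z) b = (r : ℂ) * lowZ h z b := by
  simp only [lowZ, Pi.smul_apply, Complex.real_smul, map_mul, Complex.conj_ofReal,
    Finset.mul_sum]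
  exact Finset.sum_congr rfl fun a _ => by ring

lemma conj_lowZ (h : Matrix (Fin n) (Fin n) ℂ) (z : Fin n → ℂ) (b : Fin n) :
    conj (lowZ h z b) = ∑ c : Fin n, conj (h c b) * z c := by
  simp [lowZ]

lemma conj_lowZ' (h : Matrix (Fin n) (Fin n) ℂ) (hherm : h.IsHermitian)
    (z : Fin n → ℂ) (b : Fin n) :
    conj (lowZ h z b) = ∑ c : Fin n, h b c * z c := by
  rw [conj_lowZ]
  exact Finset.sum_congr rfl fun c _ => by rw [starRingEnd_apply, hherm.apply b c]

lemma lowZ_single_one (h : Matrix (Fin n) (Fin n) ℂ) (a b : Fin n) :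
    lowZ h (Pi.single a 1) b = h a b := by
  simp [lowZ, Pi.single_apply, apply_ite (conj)]

lemma lowZ_single_I (h : Matrix (Fin n) (Fin n) ℂ) (a b : Fin n) :
    lowZ h (Pi.single a Complex.I) b = -(h a b * Complex.I) := by
  simp [lowZ, Pi.single_apply, apply_ite (conj), Complex.conj_I]

/-- The differential of the embedding `φ` at the point `(z, σ)` (dependent only on `z`),
as a continuous real-linear map. -/
def dphiL (h : Matrix (Fin n) (Fin n) ℂ) (z : Fin n → ℂ) : BasePt n →L[ℝ] Amb n :=
  LinearMap.toContinuousLinearMap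
  { toFun := fun v => fun A =>
      match A with
      | Sum.inl _ => 0
      | Sum.inr (Sum.inl b) => v.1 b
      | Sum.inr (Sum.inr _) =>
          -(1 / 2) * (∑ b : Fin n, (v.1 b * lowZ h z b + z b * lowZ h v.1 b))
            + Complex.I * (v.2 : ℂ)
    map_add' := by
      intro v w
      funext A
      obtain (_ | b | _) := A
      · simp
      · simp
      · have key : (∑ b : Fin n, ((v + w).1 b * lowZ h z b + z b * lowZ h (v + w).1 b))
            = (∑ b : Fin n, (v.1 b * lowZ h z b + z b * lowZ h v.1 b))
              + (∑ b : Fin n, (w.1 b * lowZ h z b + z b * lowZ h w.1 b)) := by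
          rw [← Finset.sum_add_distrib]
          refine Finset.sum_congr rfl fun b _ => ?_
          show ((v.1 + w.1) b * lowZ h z b + z b * lowZ h (v.1 + w.1) b) = _
          rw [lowZ_add]
          simp only [Pi.add_apply]
          ring
        show -(1 / 2) * (∑ b : Fin n, ((v + w).1 b * lowZ h z b + z b * lowZ h (v + w).1 b))
            + Complex.I * (((v + w).2 : ℝ) : ℂ) = _
        rw [key]
        show _ = -(1 / 2) * (∑ b : Fin n, (v.1 b * lowZ h z b + z b * lowZ h v.1 b))
            + Complex.I * (v.2 : ℂ)
            + (-(1 / 2) * (∑ b : Fin n, (w.1 b * lowZ h z b + z b * lowZ h w.1 b))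
            + Complex.I * (w.2 : ℂ))
        simp only [Prod.snd_add]
        push_cast
        ring
    map_smul' := by
      intro r v
      funext A
      obtain (_ | b | _) := A
      · simp
      · simp
      · have key : (∑ b : Fin n, ((r • v).1 b * lowZ h z b + z b * lowZ h (r • v).1 b))
            = (r : ℂ) * (∑ b : Fin n, (v.1 b * lowZ h z b + z b * lowZ h v.1 b)) := by
          rw [Finset.mul_sum]
          refine Finset.sum_congr rfl fun b _ => ?_
          show ((r • v.1) b * lowZ h z b + z b * lowZ h (r • v.1) b) = _
          rw [lowZ_smul_real]
          simp only [Pi.smul_apply, Complex.real_smul]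
          ring
        show -(1 / 2) * (∑ b : Fin n, ((r • v).1 b * lowZ h z b + z b * lowZ h (r • v).1 b))
            + Complex.I * (((r • v).2 : ℝ) : ℂ)
          = r • (-(1 / 2) * (∑ b : Fin n, (v.1 b * lowZ h z b + z b * lowZ h v.1 b))
            + Complex.I * (v.2 : ℂ))
        rw [key]
        show _ = r • (-(1 / 2) * (∑ b : Fin n, (v.1 b * lowZ h z b + z b * lowZ h v.1 b))
            + Complex.I * (v.2 : ℂ))
        rw [Complex.real_smul]
        show -(1 / 2) * ((r:ℂ) * _) + Complex.I * (((r * v.2 : ℝ)) : ℂ) = _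
        push_cast
        ring }

lemma dphiL_apply (h : Matrix (Fin n) (Fin n) ℂ) (z : Fin n → ℂ) (v : BasePt n) :
    dphiL h z v = fun A =>
      match A with
      | Sum.inl _ => 0
      | Sum.inr (Sum.inl b) => v.1 b
      | Sum.inr (Sum.inr _) =>
          -(1 / 2) * (∑ b : Fin n, (v.1 b * lowZ h z b + z b * lowZ h v.1 b))
            + Complex.I * (v.2 : ℂ) := rfl

end CRaux
namespace CRaux

open ContinuousLinearMap

variable {n : ℕ}

/-- A continuous linear functional `v ↦ lowZ h v.1 b` on the base. -/
def lowL (h : Matrix (Fin n) (Fin n) ℂ) (b : Fin n) : BasePt n →L[ℝ] ℂ :=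
  LinearMap.toContinuousLinearMap
  { toFun := fun v => lowZ h v.1 b
    map_add' := fun v w => by show lowZ h (v.1 + w.1) b = _; rw [lowZ_add]
    map_smul' := fun r v => by
      show lowZ h (r • v.1) b = r • lowZ h v.1 b
      rw [lowZ_smul_real, Complex.real_smul] }

/-- A continuous linear functional `v ↦ v.1 b`. -/
def z1L (b : Fin n) : BasePt n →L[ℝ] ℂ :=
  (ContinuousLinearMap.proj b).comp (ContinuousLinearMap.fst ℝ (Fin n → ℂ) ℝ)

lemma hasFDerivAt_phiEmb (h : Matrix (Fin n) (Fin n) ℂ) (p : BasePt n) :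
    HasFDerivAt (fun q : BasePt n => phiEmb h q.1 q.2) (dphiL h p.1) p := by
  apply hasFDerivAt_pi''
  intro A
  obtain (u | b | u) := A
  · have hEq : (ContinuousLinearMap.proj (R := ℝ) (φ := fun _ : AmbIdx n => ℂ)
        (Sum.inl u)).comp (dphiL h p.1) = 0 :=
      ContinuousLinearMap.ext fun v => rfl
    rw [hEq]
    exact hasFDerivAt_const _ _
  · have hEq : (ContinuousLinearMap.proj (R := ℝ) (φ := fun _ : AmbIdx n => ℂ)
        (Sum.inr (Sum.inl b))).comp (dphiL h p.1) = z1L b :=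
      ContinuousLinearMap.ext fun v => rfl
    rw [hEq]
    exact (z1L b).hasFDerivAt
  · -- component ∞
    have hsum : ∀ b : Fin n, HasFDerivAt (fun q : BasePt n => q.1 b * lowZ h q.1 b)
        (p.1 b • (lowL h b : BasePt n →L[ℝ] ℂ) + lowZ h p.1 b • (z1L b)) p :=
      fun b => HasFDerivAt.mul ((z1L b).hasFDerivAt (x := p)) ((lowL h b).hasFDerivAt (x := p))
    have hQ : HasFDerivAt (fun q : BasePt n => ∑ b : Fin n, q.1 b * lowZ h q.1 b)
        (∑ b : Fin n, (p.1 b • (lowL h b : BasePt n →L[ℝ] ℂ) + lowZ h p.1 b • (z1L b))) p :=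
      HasFDerivAt.fun_sum fun b _ => hsum b
    have hs : HasFDerivAt (fun q : BasePt n => Complex.I * (q.2 : ℂ))
        (Complex.I • (Complex.ofRealCLM.comp (ContinuousLinearMap.snd ℝ (Fin n → ℂ) ℝ))) p :=
      ((Complex.ofRealCLM.comp
        (ContinuousLinearMap.snd ℝ (Fin n → ℂ) ℝ)).hasFDerivAt (x := p)).const_mul Complex.I
    have htot := (hQ.const_mul (-(1/2) : ℂ)).add hs
    have hEq : (ContinuousLinearMap.proj (R := ℝ) (φ := fun _ : AmbIdx n => ℂ)
        (Sum.inr (Sum.inr u))).comp (dphiL h p.1)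
        = (-(1/2) : ℂ) • (∑ b : Fin n,
            (p.1 b • (lowL h b : BasePt n →L[ℝ] ℂ) + lowZ h p.1 b • (z1L b)))
          + Complex.I • (Complex.ofRealCLM.comp (ContinuousLinearMap.snd ℝ (Fin n → ℂ) ℝ)) := by
      refine ContinuousLinearMap.ext fun v => ?_
      have lhs : (ContinuousLinearMap.proj (R := ℝ) (φ := fun _ : AmbIdx n => ℂ)
          (Sum.inr (Sum.inr u))).comp (dphiL h p.1) v
          = -(1 / 2) * (∑ b : Fin n, (v.1 b * lowZ h p.1 b + p.1 b * lowZ h v.1 b))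
            + Complex.I * (v.2 : ℂ) := rfl
      rw [lhs]
      simp only [ContinuousLinearMap.add_apply, ContinuousLinearMap.smul_apply,
        ContinuousLinearMap.sum_apply, ContinuousLinearMap.comp_apply,
        ContinuousLinearMap.coe_snd', Complex.ofRealCLM_apply, smul_eq_mul]
      congr 2
      refine Finset.sum_congr rfl fun b _ => ?_
      show v.1 b * lowZ h p.1 b + p.1 b * lowZ h v.1 b
          = p.1 b * lowZ h v.1 b + lowZ h p.1 b * v.1 b
      ring
    rw [hEq]
    exact htot

end CRaux
namespace CRaux

variable {n : ℕ}

lemma dphiL_e (h : Matrix (Fin n) (Fin n) ℂ) (hherm : h.IsHermitian) (z : Fin n → ℂ)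
    (a : Fin n) :
    dphiL h z (Pi.single a 1, 0)
      = Pi.single (ia a) (1 : ℂ)
        + Pi.single (ii n) (-(1/2) * (lowZ h z a + conj (lowZ h z a))) := by
  funext A
  rw [dphiL_apply]
  obtain (u | b | u) := A
  · simp [Pi.single_apply]
  · simp [Pi.single_apply]
  · have h1 : (∑ b : Fin n, ((Pi.single a 1 : Fin n → ℂ) b * lowZ h z b
        + z b * lowZ h (Pi.single a 1) b))
        = lowZ h z a + conj (lowZ h z a) := by
      rw [Finset.sum_add_distrib]
      congr 1
      · simp [Pi.single_apply, ite_mul]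
      · rw [conj_lowZ' h hherm]
        exact Finset.sum_congr rfl fun b _ => by rw [lowZ_single_one]; ring
    show -(1 / 2) * _ + Complex.I * ((0 : ℝ) : ℂ) = _
    rw [h1]
    simp [Pi.single_apply]
lemma dphiL_i (h : Matrix (Fin n) (Fin n) ℂ) (hherm : h.IsHermitian) (z : Fin n → ℂ)
    (a : Fin n) :
    dphiL h z (Pi.single a Complex.I, 0)
      = Pi.single (ia a) Complex.I
        + Pi.single (ii n) (-(Complex.I/2) * (lowZ h z a - conj (lowZ h z a))) := by
  funext A
  rw [dphiL_apply]
  obtain (u | b | u) := A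
  · simp [Pi.single_apply]
  · simp [Pi.single_apply]
  · have h1 : (∑ b : Fin n, ((Pi.single a Complex.I : Fin n → ℂ) b * lowZ h z b
        + z b * lowZ h (Pi.single a Complex.I) b))
        = Complex.I * lowZ h z a - Complex.I * conj (lowZ h z a) := by
      rw [Finset.sum_add_distrib]
      have e1 : (∑ b : Fin n, (Pi.single a Complex.I : Fin n → ℂ) b * lowZ h z b)
          = Complex.I * lowZ h z a := by
        simp [Pi.single_apply, ite_mul]
      have e2 : (∑ b : Fin n, z b * lowZ h (Pi.single a Complex.I) b)
          = -(Complex.I * conj (lowZ h z a)) := by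
        rw [show -(Complex.I * conj (lowZ h z a))
            = Complex.I * -(conj (lowZ h z a)) by ring]
        rw [conj_lowZ' h hherm, ← Finset.sum_neg_distrib, Finset.mul_sum]
        exact Finset.sum_congr rfl fun b _ => by rw [lowZ_single_I]; ring
      rw [e1, e2]
      ring
    show -(1 / 2) * _ + Complex.I * ((0 : ℝ) : ℂ) = _
    rw [h1]
    simp [Pi.single_apply]
    ring
lemma dphiL_s (h : Matrix (Fin n) (Fin n) ℂ) (z : Fin n → ℂ) :
    dphiL h z ((0 : Fin n → ℂ), (1 : ℝ)) = Pi.single (ii n) Complex.I := by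
  funext A
  rw [dphiL_apply]
  obtain (u | b | u) := A
  · simp [Pi.single_apply]
  · simp [Pi.single_apply]
  · show -(1 / 2) * (∑ b : Fin n, ((0:ℂ) * lowZ h z b + z b * lowZ h 0 b))
        + Complex.I * ((1 : ℝ) : ℂ) = _
    simp [lowZ, Pi.single_apply]

variable {h : Matrix (Fin n) (Fin n) ℂ}

lemma comp_fderiv {g : Amb n → ℂ} {Dg : Amb n →L[ℝ] ℂ} {p : BasePt n}
    (hg : HasFDerivAt g Dg (phiEmb h p.1 p.2)) :
    fderiv ℝ (fun q : BasePt n => g (phiEmb h q.1 q.2)) p = Dg.comp (dphiL h p.1) :=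
  (hg.comp p (hasFDerivAt_phiEmb h p)).fderiv

lemma dSigma_comp {g : Amb n → ℂ} {Dg : Amb n →L[ℝ] ℂ} {p : BasePt n}
    (hg : HasFDerivAt g Dg (phiEmb h p.1 p.2)) :
    dSigma (fun q : BasePt n => g (phiEmb h q.1 q.2)) p
      = Complex.I * wT Dg (ii n) - Complex.I * wbT Dg (ii n) := by
  unfold dSigma
  rw [comp_fderiv hg]
  rw [ContinuousLinearMap.comp_apply, dphiL_s, clm_single]
  simp only [Complex.conj_I]
  ring

lemma opD_comp (hherm : h.IsHermitian) (a : Fin n) {g : Amb n → ℂ} {Dg : Amb n →L[ℝ] ℂ}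
    {p : BasePt n} (hg : HasFDerivAt g Dg (phiEmb h p.1 p.2)) :
    opD h a (fun q : BasePt n => g (phiEmb h q.1 q.2)) p
      = wT Dg (ia a) - lowZ h p.1 a * wT Dg (ii n) := by
  unfold opD dZ
  rw [dSigma_comp hg, comp_fderiv hg]
  rw [ContinuousLinearMap.comp_apply, ContinuousLinearMap.comp_apply,
    dphiL_e h hherm p.1 a, dphiL_i h hherm p.1 a, map_add, map_add,
    clm_single, clm_single, clm_single, clm_single]
  simp only [map_one, map_mul, map_add, map_sub, map_neg, map_div₀, Complex.conj_I,
    Complex.conj_conj, map_one, Complex.conj_ofNat]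
  ring_nf
  rw [Complex.I_sq]
  ring
lemma opDBar_comp (hherm : h.IsHermitian) (b : Fin n) {g : Amb n → ℂ} {Dg : Amb n →L[ℝ] ℂ}
    {p : BasePt n} (hg : HasFDerivAt g Dg (phiEmb h p.1 p.2)) :
    opDBar h b (fun q : BasePt n => g (phiEmb h q.1 q.2)) p
      = wbT Dg (ia b) - conj (lowZ h p.1 b) * wbT Dg (ii n) := by
  unfold opDBar dZBar
  rw [dSigma_comp hg, comp_fderiv hg]
  rw [ContinuousLinearMap.comp_apply, ContinuousLinearMap.comp_apply,
    dphiL_e h hherm p.1 b, dphiL_i h hherm p.1 b, map_add, map_add,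
    clm_single, clm_single, clm_single, clm_single]
  simp only [map_one, map_mul, map_add, map_sub, map_neg, map_div₀, Complex.conj_I,
    Complex.conj_conj, map_one, Complex.conj_ofNat]
  ring_nf
  rw [Complex.I_sq]
  ring

end CRaux
namespace CRaux

variable {n : ℕ}

lemma smul_single (c : ℂ) (A : AmbIdx n) (x : ℂ) :
    c • (Pi.single A x : Amb n) = Pi.single A (c * x) := by
  funext B
  by_cases hB : B = A
  · subst hB; simp
  · simp [Pi.single_apply, hB]

/-- `λ ↦ λ • u` as a real-linear continuous map. -/
def smulCLM (u : Amb n) : ℂ →L[ℝ] Amb n :=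
  LinearMap.toContinuousLinearMap
  { toFun := fun lam => lam • u
    map_add' := fun x y => add_smul x y u
    map_smul' := fun r x => smul_assoc r x u }

/-- Euler identities for a bihomogeneous function. -/
lemma euler {g : Amb n → ℂ} {a b : ℤ} {U : Set (Amb n)}
    (hg : ∀ lam : ℂ, lam ≠ 0 → ∀ u ∈ U, g (lam • u) = lam ^ a * conj lam ^ b * g u)
    {u : Amb n} (hu : u ∈ U) {Dg : Amb n →L[ℝ] ℂ} (hDg : HasFDerivAt g Dg u) :
    Dg u = ((a : ℂ) + (b : ℂ)) * g u ∧
      Dg (Complex.I • u) = ((a : ℂ) - (b : ℂ)) * Complex.I * g u := by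
  have h1 : HasFDerivAt (fun lam : ℂ => g (lam • u)) (Dg.comp (smulCLM u)) 1 := by
    have h0 := (smulCLM u).hasFDerivAt (x := (1 : ℂ))
    have hDg' : HasFDerivAt g Dg (smulCLM u 1) := by
      show HasFDerivAt g Dg ((1 : ℂ) • u)
      rw [one_smul]
      exact hDg
    exact hDg'.comp 1 h0
  have hza : HasFDerivAt (fun lam : ℂ => lam ^ a)
      (((1 : ℂ →L[ℂ] ℂ).smulRight ((a : ℂ) * 1 ^ (a - 1))).restrictScalars ℝ) 1 :=
    ((hasDerivAt_zpow a 1 (Or.inl one_ne_zero)).hasFDerivAt).restrictScalars ℝ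
  have hzb : HasFDerivAt (fun lam : ℂ => conj lam ^ b)
      ((((1 : ℂ →L[ℂ] ℂ).smulRight ((b : ℂ) * 1 ^ (b - 1))).restrictScalars ℝ).comp
        (Complex.conjCLE.toContinuousLinearMap)) 1 := by
    have houter : HasFDerivAt (fun lam : ℂ => lam ^ b)
        (((1 : ℂ →L[ℂ] ℂ).smulRight ((b : ℂ) * 1 ^ (b - 1))).restrictScalars ℝ)
        (Complex.conjCLE.toContinuousLinearMap 1) := by
      have : (Complex.conjCLE.toContinuousLinearMap (1 : ℂ)) = 1 := by
        simp [Complex.conjCLE]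
      rw [this]
      exact ((hasDerivAt_zpow b 1 (Or.inl one_ne_zero)).hasFDerivAt).restrictScalars ℝ
    exact houter.comp 1 (Complex.conjCLE.toContinuousLinearMap.hasFDerivAt)
  have hprod := (hza.mul hzb).mul_const (g u)
  have heq : (fun lam : ℂ => g (lam • u)) =ᶠ[nhds (1 : ℂ)]
      (fun lam : ℂ => lam ^ a * conj lam ^ b * g u) := by
    filter_upwards [eventually_ne_nhds (one_ne_zero (α := ℂ))] with lam hlam
    exact hg lam hlam u hu
  have h1' := h1.congr_of_eventuallyEq heq.symm
  have hEqCLM := h1'.unique hprod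
  have key : ∀ μ : ℂ, Dg (μ • u)
      = (((b : ℂ) * conj μ) + ((a : ℂ) * μ)) * g u := by
    intro μ
    have e1 := ContinuousLinearMap.ext_iff.mp hEqCLM μ
    have lhs : (Dg.comp (smulCLM u)) μ = Dg (μ • u) := rfl
    rw [lhs] at e1
    rw [e1]
    simp only [ContinuousLinearMap.smul_apply, ContinuousLinearMap.add_apply,
      ContinuousLinearMap.comp_apply, ContinuousLinearMap.coe_restrictScalars',
      ContinuousLinearMap.smulRight_apply, ContinuousLinearMap.one_apply,
      ContinuousLinearEquiv.coe_coe, smul_eq_mul, map_one, one_zpow, mul_one]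
    simp only [Complex.conjCLE_apply, one_mul]
    ring
  constructor
  · have := key 1
    rw [one_smul] at this
    rw [this]
    simp only [map_one]
    ring
  · have := key Complex.I
    rw [this]
    simp only [Complex.conj_I]
    ring

end CRaux
namespace CRaux

variable {n : ℕ}

/-- `v ↦ lam • v` as a real-linear continuous map. -/
def scaleCLM (lam : ℂ) : Amb n →L[ℝ] Amb n :=
  LinearMap.toContinuousLinearMap
  { toFun := fun v => lam • v
    map_add' := fun x y => smul_add lam x y
    map_smul' := fun r v => smul_comm lam r v }

lemma wirt_scale {T S : Amb n →L[ℝ] ℂ} {lam c : ℂ} (A : AmbIdx n)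
    (eE : T (Pi.single A lam) = c * S (Pi.single A 1))
    (eI : T (Pi.single A (lam * Complex.I)) = c * S (Pi.single A Complex.I)) :
    lam * wT T A = c * wT S A ∧ conj lam * wbT T A = c * wbT S A := by
  rw [clm_single, clm_single] at eE
  rw [clm_single, clm_single] at eI
  rw [map_mul, Complex.conj_I] at eI
  simp only [map_one, one_mul] at eE
  constructor
  · linear_combination (1/2 : ℂ) * eE - (Complex.I/2) * eI +
      (lam * wT T A/2 - conj lam * wbT T A/2 - c * wT S A/2 + c * wbT S A/2) * Complex.I_sq
  · linear_combination (1/2 : ℂ) * eE + (Complex.I/2) * eI +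
      (-(lam * wT T A)/2 + conj lam * wbT T A/2 + c * wT S A/2 - c * wbT S A/2) * Complex.I_sq

lemma fderiv_scale_eq {U : Set (Amb n)} (hUopen : IsOpen U)
    (hUcone : ∀ lam : ℂ, lam ≠ 0 → lam • U = U)
    {f : Amb n → ℂ} (hdiff : ∀ u ∈ U, HasFDerivAt f (fderiv ℝ f u) u)
    {w₁ w₂ : ℤ}
    (hhom : ∀ lam : ℂ, lam ≠ 0 → ∀ u ∈ U,
      f (lam • u) = lam ^ w₁ * conj lam ^ w₂ * f u)
    {lam : ℂ} (hlam : lam ≠ 0) {u : Amb n} (hu : u ∈ U) :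
    (fderiv ℝ f (lam • u)).comp (scaleCLM lam)
      = (lam ^ w₁ * conj lam ^ w₂) • fderiv ℝ f u := by
  have hu' : lam • u ∈ U := by
    rw [← hUcone lam hlam]
    exact Set.smul_mem_smul_set hu
  have h1 : HasFDerivAt (fun v : Amb n => f (lam • v))
      ((fderiv ℝ f (lam • u)).comp (scaleCLM lam)) u := by
    have hpt : HasFDerivAt f (fderiv ℝ f (lam • u)) (scaleCLM lam u) := by
      show HasFDerivAt f (fderiv ℝ f (lam • u)) (lam • u)
      exact hdiff _ hu'
    exact hpt.comp u ((scaleCLM lam).hasFDerivAt)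
  have h2 : HasFDerivAt (fun v : Amb n => lam ^ w₁ * conj lam ^ w₂ * f v)
      ((lam ^ w₁ * conj lam ^ w₂) • fderiv ℝ f u) u :=
    (hdiff u hu).const_mul _
  have heq : (fun v : Amb n => f (lam • v)) =ᶠ[nhds u]
      (fun v : Amb n => lam ^ w₁ * conj lam ^ w₂ * f v) :=
    Filter.eventuallyEq_of_mem (hUopen.mem_nhds hu) fun v hv => hhom lam hlam v hv
  exact (h1.congr_of_eventuallyEq heq.symm).unique h2

lemma wirt_hom {U : Set (Amb n)} (hUopen : IsOpen U)
    (hUcone : ∀ lam : ℂ, lam ≠ 0 → lam • U = U)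
    {f : Amb n → ℂ} (hdiff : ∀ u ∈ U, HasFDerivAt f (fderiv ℝ f u) u)
    {w₁ w₂ : ℤ}
    (hhom : ∀ lam : ℂ, lam ≠ 0 → ∀ u ∈ U,
      f (lam • u) = lam ^ w₁ * conj lam ^ w₂ * f u)
    (A : AmbIdx n) :
    (∀ lam : ℂ, lam ≠ 0 → ∀ u ∈ U,
      wirt f A (lam • u) = lam ^ (w₁ - 1) * conj lam ^ w₂ * wirt f A u) ∧
    (∀ lam : ℂ, lam ≠ 0 → ∀ u ∈ U,
      wirtBar f A (lam • u) = lam ^ w₁ * conj lam ^ (w₂ - 1) * wirtBar f A u) := by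
  have main : ∀ lam : ℂ, lam ≠ 0 → ∀ u ∈ U,
      lam * wT (fderiv ℝ f (lam • u)) A
        = (lam ^ w₁ * conj lam ^ w₂) * wT (fderiv ℝ f u) A ∧
      conj lam * wbT (fderiv ℝ f (lam • u)) A
        = (lam ^ w₁ * conj lam ^ w₂) * wbT (fderiv ℝ f u) A := by
    intro lam hlam u hu
    have hEqCLM := fderiv_scale_eq hUopen hUcone hdiff hhom hlam hu
    have eE : (fderiv ℝ f (lam • u)) (Pi.single A lam)
        = (lam ^ w₁ * conj lam ^ w₂) * (fderiv ℝ f u) (Pi.single A 1) := by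
      have := ContinuousLinearMap.ext_iff.mp hEqCLM (eV A)
      rw [ContinuousLinearMap.comp_apply] at this
      rw [show scaleCLM lam (eV A) = Pi.single A lam by
        show lam • (Pi.single A 1 : Amb n) = _; rw [smul_single, mul_one]] at this
      rw [this]
      simp [eV]
    have eI : (fderiv ℝ f (lam • u)) (Pi.single A (lam * Complex.I))
        = (lam ^ w₁ * conj lam ^ w₂) * (fderiv ℝ f u) (Pi.single A Complex.I) := by
      have := ContinuousLinearMap.ext_iff.mp hEqCLM (iV A)
      rw [ContinuousLinearMap.comp_apply] at this
      rw [show scaleCLM lam (iV A) = Pi.single A (lam * Complex.I) by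
        show lam • (Pi.single A Complex.I : Amb n) = _; rw [smul_single]] at this
      rw [this]
      simp [iV]
    exact wirt_scale A eE eI
  have hc : ∀ lam : ℂ, lam ≠ 0 → lam * lam ^ (w₁ - 1) = lam ^ w₁ := by
    intro lam hlam
    rw [zpow_sub_one₀ hlam, mul_comm, mul_assoc, inv_mul_cancel₀ hlam, mul_one]
  have hcb : ∀ lam : ℂ, lam ≠ 0 → conj lam * conj lam ^ (w₂ - 1) = conj lam ^ w₂ := by
    intro lam hlam
    have : conj lam ≠ 0 := by
      simpa using hlam
    rw [zpow_sub_one₀ this, mul_comm, mul_assoc, inv_mul_cancel₀ this, mul_one]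
  constructor
  · intro lam hlam u hu
    apply mul_left_cancel₀ hlam
    rw [wirt_eq_wT, wirt_eq_wT, (main lam hlam u hu).1]
    rw [show lam * (lam ^ (w₁ - 1) * conj lam ^ w₂ * wT (fderiv ℝ f u) A)
        = (lam * lam ^ (w₁ - 1)) * conj lam ^ w₂ * wT (fderiv ℝ f u) A by ring,
      hc lam hlam]
  · intro lam hlam u hu
    have hlam' : conj lam ≠ 0 := by simpa using hlam
    apply mul_left_cancel₀ hlam'
    rw [wirtBar_eq_wbT, wirtBar_eq_wbT, (main lam hlam u hu).2]
    rw [show conj lam * (lam ^ w₁ * conj lam ^ (w₂ - 1) * wbT (fderiv ℝ f u) A)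
        = lam ^ w₁ * (conj lam * conj lam ^ (w₂ - 1)) * wbT (fderiv ℝ f u) A by ring,
      hcb lam hlam]

end CRaux
namespace CRaux

variable {n : ℕ}

lemma ambG_mul_inv (h : Matrix (Fin n) (Fin n) ℂ) (hnd : IsUnit h.det) :
    ambG h * ambG h⁻¹ = 1 := by
  have hmul := Matrix.mul_nonsing_inv h hnd
  ext A B
  rw [Matrix.mul_apply, Fintype.sum_sum_type]
  obtain (u | a | u) := A <;> obtain (v | b | v) := B <;>
    simp only [Fintype.sum_sum_type, Finset.univ_unique, Finset.sum_singleton, ambG,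
      Matrix.of_apply, zero_mul, mul_zero, mul_one, one_mul, add_zero, zero_add,
      Finset.sum_const_zero, Matrix.one_apply, Sum.inr.injEq, Sum.inl.injEq] <;>
    try simp
  have := congrFun (congrFun hmul a) b
  rw [Matrix.mul_apply] at this
  rw [this, Matrix.one_apply]

lemma ambG_inv (h : Matrix (Fin n) (Fin n) ℂ) (hnd : IsUnit h.det) :
    (ambG h)⁻¹ = ambG h⁻¹ :=
  Matrix.inv_eq_right_inv (ambG_mul_inv h hnd)

lemma ambLap_expand (h : Matrix (Fin n) (Fin n) ℂ) (hnd : IsUnit h.det)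
    (f : Amb n → ℂ) (P : Amb n) :
    ambLap h f P = wirt (wirtBar f (ii n)) (i0 n) P + wirt (wirtBar f (i0 n)) (ii n) P
      + ∑ a : Fin n, ∑ b : Fin n, h⁻¹ a b * wirt (wirtBar f (ia b)) (ia a) P := by
  unfold ambLap
  rw [ambG_inv h hnd]
  rw [Fintype.sum_sum_type]
  simp only [Fintype.sum_sum_type, Finset.univ_unique, Finset.sum_singleton, ambG,
    Matrix.of_apply, zero_mul, one_mul, add_zero, zero_add, Finset.sum_const_zero]
  ring

/-- Coefficient functional `u ↦ ∑ c, conj (h c b) * u c` (complex linear). -/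
def coefBarL (h : Matrix (Fin n) (Fin n) ℂ) (b : Fin n) : Amb n →L[ℝ] ℂ :=
  LinearMap.toContinuousLinearMap
  { toFun := fun u => ∑ c : Fin n, conj (h c b) * u (ia c)
    map_add' := fun u v => by
      simp [Pi.add_apply, mul_add, Finset.sum_add_distrib]
    map_smul' := fun r u => by
      simp only [Pi.smul_apply, Complex.real_smul, smul_eq_mul, RingHom.id_apply]
      rw [Finset.mul_sum]
      exact Finset.sum_congr rfl fun c _ => by ring }

/-- Coefficient functional `u ↦ ∑ c, h c a * conj (u c)` (conjugate linear). -/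
def coefHolL (h : Matrix (Fin n) (Fin n) ℂ) (a : Fin n) : Amb n →L[ℝ] ℂ :=
  LinearMap.toContinuousLinearMap
  { toFun := fun u => ∑ c : Fin n, h c a * conj (u (ia c))
    map_add' := fun u v => by
      simp [Pi.add_apply, mul_add, Finset.sum_add_distrib]
    map_smul' := fun r u => by
      simp only [Pi.smul_apply, Complex.real_smul, smul_eq_mul, RingHom.id_apply, map_mul,
        Complex.conj_ofReal]
      rw [Finset.mul_sum]
      exact Finset.sum_congr rfl fun c _ => by ring }

lemma coefBarL_single (h : Matrix (Fin n) (Fin n) ℂ) (b : Fin n) (A : AmbIdx n) (x : ℂ) :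
    coefBarL h b (Pi.single A x)
      = match A with
        | Sum.inr (Sum.inl a) => conj (h a b) * x
        | _ => 0 := by
  show (∑ c : Fin n, conj (h c b) * (Pi.single A x : Amb n) (ia c)) = _
  obtain (u | a | u) := A
  · simp [Pi.single_apply]
  · simp [Pi.single_apply, Finset.sum_ite_eq']
  · simp [Pi.single_apply]

lemma coefHolL_single (h : Matrix (Fin n) (Fin n) ℂ) (a : Fin n) (A : AmbIdx n) (x : ℂ) :
    coefHolL h a (Pi.single A x)
      = match A with
        | Sum.inr (Sum.inl c) => h c a * conj x
        | _ => 0 := by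
  show (∑ c : Fin n, h c a * conj ((Pi.single A x : Amb n) (ia c))) = _
  obtain (u | c | u) := A
  · simp [Pi.single_apply]
  · simp [Pi.single_apply, apply_ite (conj), Finset.sum_ite_eq']
  · simp [Pi.single_apply]

lemma wT_coefBarL (h : Matrix (Fin n) (Fin n) ℂ) (b : Fin n) (A : AmbIdx n) :
    wT (coefBarL h b) A
      = match A with
        | Sum.inr (Sum.inl a) => conj (h a b)
        | _ => 0 := by
  unfold wT eV iV
  rw [coefBarL_single, coefBarL_single]
  obtain (u | a | u) := A
  · simp
  · show (1/2) * (conj (h a b) * 1 - Complex.I * (conj (h a b) * Complex.I)) = conj (h a b)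
    ring_nf
    rw [Complex.I_sq]
    ring
  · simp

lemma wbT_coefHolL (h : Matrix (Fin n) (Fin n) ℂ) (a : Fin n) (A : AmbIdx n) :
    wbT (coefHolL h a) A
      = match A with
        | Sum.inr (Sum.inl c) => h c a
        | _ => 0 := by
  unfold wbT eV iV
  rw [coefHolL_single, coefHolL_single]
  obtain (u | c | u) := A
  · simp
  · show (1/2) * (h c a * conj 1 + Complex.I * (h c a * conj Complex.I)) = h c a
    rw [Complex.conj_I]
    simp only [map_one]
    ring_nf
    rw [Complex.I_sq]
    ring
  · simp

end CRaux
open CRaux in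
/-- the ambient Laplacian induces the CR sub-Laplacian on the hyperquadric.
Let `n ≥ 1`, `h` a nondegenerate Hermitian `n×n` matrix, `w₁, w₂ ∈ ℤ` with
`w₁ + w₂ = −n`.  Let `U ⊆ ℂ^{n+2}` be open with `λ·U = U` for all `λ ≠ 0` and containing
all points `φ(z,σ)`, let `f : U → ℂ` be smooth and bihomogeneous of bidegree `(w₁,w₂)`,
and set `F := f ∘ φ`.  Then at every point,
`(Δ̃f)(φ(z,σ)) = ½·Σ_{a,b} (h⁻¹)_{ab}·(∂_a ∂_b̄ F + ∂_b̄ ∂_a F)(z,σ)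
  + (i·(w₁−w₂)/2)·∂_σ F(z,σ)`. -/
theorem ambient_laplacian_induces_sublaplacian
    (n : ℕ) (hn : 1 ≤ n) (h : Matrix (Fin n) (Fin n) ℂ)
    (hherm : h.IsHermitian) (hnd : IsUnit h.det)
    (w₁ w₂ : ℤ) (hw : w₁ + w₂ = -(n : ℤ))
    (U : Set (Amb n)) (hUopen : IsOpen U)
    (hUcone : ∀ lam : ℂ, lam ≠ 0 → lam • U = U)
    (hUphi : ∀ (z : Fin n → ℂ) (σ : ℝ), phiEmb h z σ ∈ U)
    (f : Amb n → ℂ) (hf : ContDiffOn ℝ (⊤ : ℕ∞) f U)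
    (hhom : ∀ lam : ℂ, lam ≠ 0 → ∀ u ∈ U,
      f (lam • u) = lam ^ w₁ * (conj lam) ^ w₂ * f u)
    (F : BasePt n → ℂ) (hF : F = fun p : BasePt n => f (phiEmb h p.1 p.2)) :
    ∀ (z : Fin n → ℂ) (σ : ℝ),
      ambLap h f (phiEmb h z σ) =
        (1 / 2) * (∑ a : Fin n, ∑ b : Fin n, h⁻¹ a b *
            (opD h a (opDBar h b F) (z, σ) + opDBar h b (opD h a F) (z, σ)))
          + (Complex.I * ((w₁ : ℂ) - (w₂ : ℂ)) / 2) * dSigma F (z, σ) := by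
  -- differentiability of f on U
  have hdiff : ∀ u ∈ U, HasFDerivAt f (fderiv ℝ f u) u := fun u hu =>
    (((hf.differentiableOn (by simp)) u hu).differentiableAt (hUopen.mem_nhds hu)).hasFDerivAt
  intro z σ
  set P : Amb n := phiEmb h z σ with hPdef
  have hPU : P ∈ U := hUphi z σ
  set D2 : Amb n →L[ℝ] Amb n →L[ℝ] ℂ := fderiv ℝ (fderiv ℝ f) P with hD2def
  have hD2 : HasFDerivAt (fderiv ℝ f) D2 P := by
    have h1 : ContDiffAt ℝ (⊤ : ℕ∞) f P := hf.contDiffAt (hUopen.mem_nhds hPU)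
    have h2 : ContDiffAt ℝ 1 (fderiv ℝ f) P := h1.fderiv_right (WithTop.coe_le_coe.mpr le_top)
    exact (h2.differentiableAt one_ne_zero).hasFDerivAt
  have hsym : ∀ v w : Amb n, D2 v w = D2 w v := fun v w =>
    second_derivative_symmetric_of_eventually
      (Filter.eventually_of_mem (hUopen.mem_nhds hPU) fun y hy => hdiff y hy) hD2 v w
  have hdirv : ∀ v : Amb n, HasFDerivAt (fun u => fderiv ℝ f u v)
      ((ContinuousLinearMap.apply ℝ ℂ v).comp D2) P := fun v =>
    ((ContinuousLinearMap.apply ℝ ℂ v).hasFDerivAt).comp P hD2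
  -- derivatives of the Wirtinger derivatives of `f` at `P`
  set DbarB : AmbIdx n → (Amb n →L[ℝ] ℂ) := fun B =>
    (1/2 : ℂ) • (((ContinuousLinearMap.apply ℝ ℂ (eV B)).comp D2)
      + Complex.I • ((ContinuousLinearMap.apply ℝ ℂ (iV B)).comp D2)) with hDbarBdef
  set DholB : AmbIdx n → (Amb n →L[ℝ] ℂ) := fun B =>
    (1/2 : ℂ) • (((ContinuousLinearMap.apply ℝ ℂ (eV B)).comp D2)
      - Complex.I • ((ContinuousLinearMap.apply ℝ ℂ (iV B)).comp D2)) with hDholBdef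
  have hwbar : ∀ B, HasFDerivAt (wirtBar f B) (DbarB B) P := by
    intro B
    have h1 := ((hdirv (eV B)).add ((hdirv (iV B)).const_mul Complex.I)).const_mul (1/2 : ℂ)
    rw [hDbarBdef]
    exact h1
  have hwhol : ∀ B, HasFDerivAt (wirt f B) (DholB B) P := by
    intro B
    have h1 := ((hdirv (eV B)).sub ((hdirv (iV B)).const_mul Complex.I)).const_mul (1/2 : ℂ)
    rw [hDholBdef]
    exact h1
  set MM : AmbIdx n → AmbIdx n → ℂ := fun A B => wT (DbarB B) A with hMMdef
  have hM : ∀ A B, wirt (wirtBar f B) A P = MM A B := fun A B => by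
    rw [wirt_eq_wT, (hwbar B).fderiv, hMMdef]
  have hMMwbT : ∀ A B, wbT (DholB B) A = MM B A := by
    intro A B
    rw [hMMdef, hDbarBdef, hDholBdef]
    unfold CRaux.wT CRaux.wbT
    simp only [ContinuousLinearMap.smul_apply, ContinuousLinearMap.add_apply,
      ContinuousLinearMap.sub_apply, ContinuousLinearMap.comp_apply,
      ContinuousLinearMap.apply_apply, smul_eq_mul]
    rw [hsym (iV A) (eV B), hsym (iV A) (iV B), hsym (eV A) (eV B), hsym (eV A) (iV B)]
    ring
  -- first-order data
  set g₁ : ℂ := wirt f (ii n) P with hg1def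
  set g₂ : ℂ := wirtBar f (ii n) P with hg2def
  have hfP : HasFDerivAt f (fderiv ℝ f P) (phiEmb h (z, σ).1 (z, σ).2) := hdiff P hPU
  have hdSig : dSigma F (z, σ) = Complex.I * g₁ - Complex.I * g₂ := by
    rw [hF]
    rw [CRaux.dSigma_comp hfP]
    rw [hg1def, hg2def, wirt_eq_wT, wirtBar_eq_wbT]
  -- the functions `opDBar b F` and `opD a F` as compositions with φ
  have hopDBarF : ∀ b, opDBar h b F = fun p : BasePt n =>
      (fun u : Amb n => wirtBar f (ia b) u
        - (∑ c : Fin n, conj (h c b) * u (ia c)) * wirtBar f (ii n) u)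
      (phiEmb h p.1 p.2) := by
    intro b
    funext p
    rw [hF, CRaux.opDBar_comp hherm b (hdiff _ (hUphi p.1 p.2))]
    rw [CRaux.conj_lowZ]
    rfl
  have hopDF : ∀ a, opD h a F = fun p : BasePt n =>
      (fun u : Amb n => wirt f (ia a) u
        - (∑ c : Fin n, h c a * conj (u (ia c))) * wirt f (ii n) u)
      (phiEmb h p.1 p.2) := by
    intro a
    funext p
    rw [hF, CRaux.opD_comp hherm a (hdiff _ (hUphi p.1 p.2))]
    rfl
  -- derivatives at P of those ambient functions
  have hkbar : ∀ b : Fin n, HasFDerivAt (fun u : Amb n => wirtBar f (ia b) u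
      - (∑ c : Fin n, conj (h c b) * u (ia c)) * wirtBar f (ii n) u)
      (DbarB (ia b) - ((∑ c : Fin n, conj (h c b) * P (ia c)) • DbarB (ii n)
        + g₂ • coefBarL h b)) P := by
    intro b
    exact (hwbar (ia b)).sub (((coefBarL h b).hasFDerivAt).mul (hwbar (ii n)))
  have hkhol : ∀ a : Fin n, HasFDerivAt (fun u : Amb n => wirt f (ia a) u
      - (∑ c : Fin n, h c a * conj (u (ia c))) * wirt f (ii n) u)
      (DholB (ia a) - ((∑ c : Fin n, h c a * conj (P (ia c))) • DholB (ii n)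
        + g₁ • coefHolL h a)) P := by
    intro a
    exact (hwhol (ia a)).sub (((coefHolL h a).hasFDerivAt).mul (hwhol (ii n)))
  have hcoefP : ∀ b : Fin n, (∑ c : Fin n, conj (h c b) * P (ia c)) = conj (lowZ h z b) := by
    intro b
    rw [CRaux.conj_lowZ]
    exact Finset.sum_congr rfl fun c _ => by rw [hPdef]; rfl
  have hcoefP' : ∀ a : Fin n, (∑ c : Fin n, h c a * conj (P (ia c))) = lowZ h z a := by
    intro a
    show _ = ∑ c : Fin n, h c a * conj (z c)
    exact Finset.sum_congr rfl fun c _ => by rw [hPdef]; rfl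
  -- second-order terms
  have hterm1 : ∀ a b : Fin n, opD h a (opDBar h b F) (z, σ)
      = MM (ia a) (ia b) - conj (lowZ h z b) * MM (ia a) (ii n) - conj (h a b) * g₂
        - lowZ h z a * (MM (ii n) (ia b) - conj (lowZ h z b) * MM (ii n) (ii n)) := by
    intro a b
    have hcb1 : wT (coefBarL h b) (ia a) = conj (h a b) := CRaux.wT_coefBarL h b (ia a)
    have hcb2 : wT (coefBarL h b) (ii n) = 0 := CRaux.wT_coefBarL h b (ii n)
    have hMMwT : ∀ A B : AmbIdx n, wT (DbarB B) A = MM A B := fun A B => rfl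
    rw [hopDBarF b]
    rw [CRaux.opD_comp hherm a (p := (z, σ)) (hkbar b)]
    dsimp only
    rw [CRaux.wT_combo, CRaux.wT_combo, hcb1, hcb2, hcoefP b,
      hMMwT (ia a) (ia b), hMMwT (ii n) (ia b), hMMwT (ia a) (ii n), hMMwT (ii n) (ii n)]
    ring
  have hterm2 : ∀ a b : Fin n, opDBar h b (opD h a F) (z, σ)
      = MM (ia a) (ia b) - lowZ h z a * MM (ii n) (ia b) - h b a * g₁
        - conj (lowZ h z b) * (MM (ia a) (ii n) - lowZ h z a * MM (ii n) (ii n)) := by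
    intro a b
    have hch1 : wbT (coefHolL h a) (ia b) = h b a := CRaux.wbT_coefHolL h a (ia b)
    have hch2 : wbT (coefHolL h a) (ii n) = 0 := CRaux.wbT_coefHolL h a (ii n)
    rw [hopDF a]
    rw [CRaux.opDBar_comp hherm b (p := (z, σ)) (hkhol a)]
    dsimp only
    rw [CRaux.wbT_combo, CRaux.wbT_combo, hch1, hch2, hcoefP' a,
      hMMwbT (ia b) (ia a), hMMwbT (ii n) (ia a), hMMwbT (ia b) (ii n), hMMwbT (ii n) (ii n)]
    ring
  -- Euler identities
  have hhomwirt := CRaux.wirt_hom hUopen hUcone hdiff hhom (ii n)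
  have hE2 := CRaux.euler hhomwirt.1 hPU (hwhol (ii n))
  have hE1 := CRaux.euler hhomwirt.2 hPU (hwbar (ii n))
  have hsum1 : (DbarB (ii n)) P = (∑ A : AmbIdx n, P A * wT (DbarB (ii n)) A)
      + (∑ A : AmbIdx n, conj (P A) * wbT (DbarB (ii n)) A) := by
    rw [clm_eq_sum, Finset.sum_add_distrib]
  have hsum1' : (DbarB (ii n)) (Complex.I • P)
      = Complex.I * (∑ A : AmbIdx n, P A * wT (DbarB (ii n)) A)
        - Complex.I * (∑ A : AmbIdx n, conj (P A) * wbT (DbarB (ii n)) A) := by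
    rw [clm_eq_sum, Finset.mul_sum, Finset.mul_sum, ← Finset.sum_sub_distrib]
    refine Finset.sum_congr rfl fun A _ => ?_
    have hIPA : (Complex.I • P) A = Complex.I * P A := rfl
    rw [hIPA, map_mul, Complex.conj_I]
    ring
  have hsum2 : (DholB (ii n)) P = (∑ A : AmbIdx n, P A * wT (DholB (ii n)) A)
      + (∑ A : AmbIdx n, conj (P A) * wbT (DholB (ii n)) A) := by
    rw [clm_eq_sum, Finset.sum_add_distrib]
  have hsum2' : (DholB (ii n)) (Complex.I • P)
      = Complex.I * (∑ A : AmbIdx n, P A * wT (DholB (ii n)) A)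
        - Complex.I * (∑ A : AmbIdx n, conj (P A) * wbT (DholB (ii n)) A) := by
    rw [clm_eq_sum, Finset.mul_sum, Finset.mul_sum, ← Finset.sum_sub_distrib]
    refine Finset.sum_congr rfl fun A _ => ?_
    have hIPA : (Complex.I • P) A = Complex.I * P A := rfl
    rw [hIPA, map_mul, Complex.conj_I]
    ring
  have hX1 : (∑ A : AmbIdx n, P A * wT (DbarB (ii n)) A) = (w₁ : ℂ) * g₂ := by
    have s1 : (∑ A : AmbIdx n, P A * wT (DbarB (ii n)) A)
        + (∑ A : AmbIdx n, conj (P A) * wbT (DbarB (ii n)) A)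
        = ((w₁ : ℂ) + ((w₂ - 1 : ℤ) : ℂ)) * g₂ := by
      rw [← hsum1]
      exact hE1.1
    have s2 : Complex.I * (∑ A : AmbIdx n, P A * wT (DbarB (ii n)) A)
        - Complex.I * (∑ A : AmbIdx n, conj (P A) * wbT (DbarB (ii n)) A)
        = ((w₁ : ℂ) - ((w₂ - 1 : ℤ) : ℂ)) * Complex.I * g₂ := by
      rw [← hsum1']
      exact hE1.2
    have s3 : (∑ A : AmbIdx n, P A * wT (DbarB (ii n)) A)
        - (∑ A : AmbIdx n, conj (P A) * wbT (DbarB (ii n)) A)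
        = ((w₁ : ℂ) - ((w₂ - 1 : ℤ) : ℂ)) * g₂ := by
      apply mul_left_cancel₀ Complex.I_ne_zero
      linear_combination s2
    push_cast at s1 s3
    linear_combination s1 / 2 + s3 / 2
  have hY2 : (∑ A : AmbIdx n, conj (P A) * wbT (DholB (ii n)) A) = (w₂ : ℂ) * g₁ := by
    have s1 : (∑ A : AmbIdx n, P A * wT (DholB (ii n)) A)
        + (∑ A : AmbIdx n, conj (P A) * wbT (DholB (ii n)) A)
        = (((w₁ - 1 : ℤ) : ℂ) + (w₂ : ℂ)) * g₁ := by
      rw [← hsum2]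
      exact hE2.1
    have s2 : Complex.I * (∑ A : AmbIdx n, P A * wT (DholB (ii n)) A)
        - Complex.I * (∑ A : AmbIdx n, conj (P A) * wbT (DholB (ii n)) A)
        = (((w₁ - 1 : ℤ) : ℂ) - (w₂ : ℂ)) * Complex.I * g₁ := by
      rw [← hsum2']
      exact hE2.2
    have s3 : (∑ A : AmbIdx n, P A * wT (DholB (ii n)) A)
        - (∑ A : AmbIdx n, conj (P A) * wbT (DholB (ii n)) A)
        = (((w₁ - 1 : ℤ) : ℂ) - (w₂ : ℂ)) * g₁ := by
      apply mul_left_cancel₀ Complex.I_ne_zero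
      linear_combination s2
    push_cast at s1 s3
    linear_combination s1 / 2 - s3 / 2
  -- the quadric quantity Q
  set Q : ℂ := ∑ a : Fin n, z a * lowZ h z a with hQdef
  have hQreal : conj Q = Q := by
    rw [hQdef, map_sum]
    have e1 : ∀ a : Fin n, conj (z a * lowZ h z a)
        = ∑ b : Fin n, (h a b * z b) * conj (z a) := by
      intro a
      rw [map_mul, CRaux.conj_lowZ' h hherm, Finset.mul_sum]
      exact Finset.sum_congr rfl fun b _ => by ring
    rw [Finset.sum_congr rfl fun a _ => e1 a, Finset.sum_comm]
    refine Finset.sum_congr rfl fun b _ => ?_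
    rw [lowZ, Finset.mul_sum]
    exact Finset.sum_congr rfl fun a _ => by ring
  have hPapp1 : ∀ u : Unit, P (Sum.inl u) = 1 := fun u => rfl
  have hPapp2 : ∀ a : Fin n, P (ia a) = z a := fun a => rfl
  have hPapp3 : ∀ u : Unit, P (Sum.inr (Sum.inr u)) = -(1/2) * Q + Complex.I * (σ : ℂ) :=
    fun u => rfl
  have hexpand : ∀ φv : AmbIdx n → ℂ, (∑ A : AmbIdx n, P A * φv A)
      = φv (i0 n) + ((∑ a : Fin n, z a * φv (ia a))
        + (-(1/2) * Q + Complex.I * (σ : ℂ)) * φv (ii n)) := by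
    intro φv
    rw [Fintype.sum_sum_type, Fintype.sum_sum_type]
    simp only [Finset.univ_unique, Finset.sum_singleton]
    rw [hPapp1, hPapp3, one_mul]
    rfl
  have hexpandc : ∀ φv : AmbIdx n → ℂ, (∑ A : AmbIdx n, conj (P A) * φv A)
      = φv (i0 n) + ((∑ a : Fin n, conj (z a) * φv (ia a))
        + (-(1/2) * Q - Complex.I * (σ : ℂ)) * φv (ii n)) := by
    intro φv
    rw [Fintype.sum_sum_type, Fintype.sum_sum_type]
    simp only [Finset.univ_unique, Finset.sum_singleton]
    rw [hPapp1, hPapp3]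
    rw [show conj (1 : ℂ) = 1 from map_one _, one_mul]
    rw [show conj (-(1/2) * Q + Complex.I * (σ : ℂ)) = -(1/2) * Q - Complex.I * (σ : ℂ) by
      rw [map_add, map_mul, map_mul, Complex.conj_I, Complex.conj_ofReal, hQreal]
      rw [show conj (-(1/2) : ℂ) = -(1/2) by simp [Complex.ext_iff]]
      ring]
    rfl
  have hI : MM (i0 n) (ii n) + ((∑ a : Fin n, z a * MM (ia a) (ii n))
      + (-(1/2) * Q + Complex.I * (σ : ℂ)) * MM (ii n) (ii n)) = (w₁ : ℂ) * g₂ := by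
    rw [← hX1]
    exact (hexpand (fun A => MM A (ii n))).symm
  have hII : MM (ii n) (i0 n) + ((∑ a : Fin n, conj (z a) * MM (ii n) (ia a))
      + (-(1/2) * Q - Complex.I * (σ : ℂ)) * MM (ii n) (ii n)) = (w₂ : ℂ) * g₁ := by
    rw [← hY2]
    have e1 : (∑ A : AmbIdx n, conj (P A) * wbT (DholB (ii n)) A)
        = ∑ A : AmbIdx n, conj (P A) * MM (ii n) A :=
      Finset.sum_congr rfl fun A _ => by rw [hMMwbT]
    rw [e1]
    exact (hexpandc (fun A => MM (ii n) A)).symm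
  -- matrix contraction identities
  have hS1 : ∀ a : Fin n, (∑ b : Fin n, h⁻¹ a b * conj (lowZ h z b)) = z a := by
    intro a
    have e1 : ∀ b : Fin n, h⁻¹ a b * conj (lowZ h z b)
        = ∑ c : Fin n, h⁻¹ a b * (h b c * z c) := fun b => by
      rw [CRaux.conj_lowZ' h hherm, Finset.mul_sum]
    rw [Finset.sum_congr rfl fun b _ => e1 b, Finset.sum_comm]
    have e2 : ∀ c : Fin n, (∑ b : Fin n, h⁻¹ a b * (h b c * z c))
        = (h⁻¹ * h) a c * z c := fun c => by
      rw [Matrix.mul_apply, Finset.sum_mul]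
      exact Finset.sum_congr rfl fun b _ => by ring
    rw [Finset.sum_congr rfl fun c _ => e2 c, Matrix.nonsing_inv_mul h hnd]
    simp [Matrix.one_apply]
  have hS2 : ∀ b : Fin n, (∑ a : Fin n, h⁻¹ a b * lowZ h z a) = conj (z b) := by
    intro b
    have e1 : ∀ a : Fin n, h⁻¹ a b * lowZ h z a
        = ∑ c : Fin n, (h c a * h⁻¹ a b) * conj (z c) := fun a => by
      rw [lowZ, Finset.mul_sum]
      exact Finset.sum_congr rfl fun c _ => by ring
    rw [Finset.sum_congr rfl fun a _ => e1 a, Finset.sum_comm]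
    have e2 : ∀ c : Fin n, (∑ a : Fin n, (h c a * h⁻¹ a b) * conj (z c))
        = (h * h⁻¹) c b * conj (z c) := fun c => by
      rw [Matrix.mul_apply, Finset.sum_mul]
    rw [Finset.sum_congr rfl fun c _ => e2 c, Matrix.mul_nonsing_inv h hnd]
    simp [Matrix.one_apply]
  have hS3' : (∑ a : Fin n, ∑ b : Fin n, h⁻¹ a b * h b a) = (n : ℂ) := by
    have e2 : ∀ a : Fin n, (∑ b : Fin n, h⁻¹ a b * h b a) = (h⁻¹ * h) a a := fun a =>
      (Matrix.mul_apply).symm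
    rw [Finset.sum_congr rfl fun a _ => e2 a, Matrix.nonsing_inv_mul h hnd]
    simp [Matrix.one_apply]
  have hS3 : (∑ a : Fin n, ∑ b : Fin n, h⁻¹ a b * conj (h a b)) = (n : ℂ) := by
    rw [← hS3']
    refine Finset.sum_congr rfl fun a _ => Finset.sum_congr rfl fun b _ => ?_
    rw [starRingEnd_apply, hherm.apply b a]
  -- assembling the double sum
  have step1 : ∀ a b : Fin n,
      h⁻¹ a b * (opD h a (opDBar h b F) (z, σ) + opDBar h b (opD h a F) (z, σ))
      = 2 * (h⁻¹ a b * MM (ia a) (ia b))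
        - (h⁻¹ a b * conj (h a b)) * g₂
        - (h⁻¹ a b * h b a) * g₁
        - 2 * ((h⁻¹ a b * conj (lowZ h z b)) * MM (ia a) (ii n))
        - 2 * (lowZ h z a * (h⁻¹ a b * MM (ii n) (ia b)))
        + 2 * (lowZ h z a * ((h⁻¹ a b * conj (lowZ h z b)) * MM (ii n) (ii n))) := by
    intro a b
    rw [hterm1 a b, hterm2 a b]
    ring
  have hinner : ∀ a : Fin n,
      (∑ b : Fin n, h⁻¹ a b * (opD h a (opDBar h b F) (z, σ) + opDBar h b (opD h a F) (z, σ)))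
      = 2 * (∑ b : Fin n, h⁻¹ a b * MM (ia a) (ia b))
        - (∑ b : Fin n, h⁻¹ a b * conj (h a b)) * g₂
        - (∑ b : Fin n, h⁻¹ a b * h b a) * g₁
        - 2 * (z a * MM (ia a) (ii n))
        - 2 * (lowZ h z a * (∑ b : Fin n, h⁻¹ a b * MM (ii n) (ia b)))
        + 2 * (lowZ h z a * (z a * MM (ii n) (ii n))) := by
    intro a
    rw [Finset.sum_congr rfl fun b _ => step1 a b]
    simp only [Finset.sum_sub_distrib, Finset.sum_add_distrib]
    rw [← Finset.mul_sum, ← Finset.mul_sum, ← Finset.mul_sum, ← Finset.mul_sum,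
      ← Finset.mul_sum, ← Finset.mul_sum]
    rw [← Finset.sum_mul, ← Finset.sum_mul, ← Finset.sum_mul, ← Finset.sum_mul]
    rw [hS1 a]
  have hO5 : (∑ a : Fin n, lowZ h z a * (∑ b : Fin n, h⁻¹ a b * MM (ii n) (ia b)))
      = ∑ b : Fin n, conj (z b) * MM (ii n) (ia b) := by
    have e1 : ∀ a : Fin n, lowZ h z a * (∑ b : Fin n, h⁻¹ a b * MM (ii n) (ia b))
        = ∑ b : Fin n, (h⁻¹ a b * lowZ h z a) * MM (ii n) (ia b) := fun a => by
      rw [Finset.mul_sum]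
      exact Finset.sum_congr rfl fun b _ => by ring
    rw [Finset.sum_congr rfl fun a _ => e1 a, Finset.sum_comm]
    refine Finset.sum_congr rfl fun b _ => ?_
    rw [← Finset.sum_mul, hS2 b]
  have hO6 : (∑ a : Fin n, lowZ h z a * (z a * MM (ii n) (ii n)))
      = Q * MM (ii n) (ii n) := by
    rw [hQdef, Finset.sum_mul]
    exact Finset.sum_congr rfl fun a _ => by ring
  have hbig : (∑ a : Fin n, ∑ b : Fin n, h⁻¹ a b *
        (opD h a (opDBar h b F) (z, σ) + opDBar h b (opD h a F) (z, σ)))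
      = 2 * (∑ a : Fin n, ∑ b : Fin n, h⁻¹ a b * MM (ia a) (ia b))
        - (n : ℂ) * g₂ - (n : ℂ) * g₁
        - 2 * (∑ a : Fin n, z a * MM (ia a) (ii n))
        - 2 * (∑ b : Fin n, conj (z b) * MM (ii n) (ia b))
        + 2 * (Q * MM (ii n) (ii n)) := by
    rw [Finset.sum_congr rfl fun a _ => hinner a]
    simp only [Finset.sum_sub_distrib, Finset.sum_add_distrib]
    rw [← Finset.mul_sum, ← Finset.mul_sum, ← Finset.mul_sum, ← Finset.mul_sum,
      ← Finset.sum_mul, ← Finset.sum_mul]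
    rw [hS3, hS3', hO5, hO6]
  -- conclusion
  have hwC : (w₁ : ℂ) + (w₂ : ℂ) = -(n : ℂ) := by exact_mod_cast hw
  rw [ambLap_expand h hnd f P]
  simp only [hM]
  rw [hbig, hdSig]
  linear_combination hI + hII + ((g₁ + g₂)/2) * hwC +
    ((((w₂ : ℂ) - (w₁ : ℂ)) * g₁ + ((w₁ : ℂ) - (w₂ : ℂ)) * g₂)/2) * Complex.I_sq
end
end

section
/- Let k ≥ 1. Call a permutation s of {1,…,2k} parity-swapping if s maps every odd number to an even number (and hence every even number to an odd number). For parity-swapping s, define σ₁^s, σ₂^s ∈ S_k by σ₁^s(m) = n if and only if s(2m−1) = 2n, and σ₂^s(m) = n if and only if s(2m) = 2n−1; set σ̃^s := σ₂^s ∘ σ₁^s. Let H ≤ S_{2k} be the subgroup of parity-preserving permutations (those mapping odd numbers to odd numbers and even numbers to even numbers). Then for any two parity-swapping permutations s, s' ∈ S_{2k}: there exists σ ∈ H with s' = σ∘s∘σ⁻¹ if and only if σ̃^{s'} and σ̃^{s} are conjugate in S_k. -/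
/-- The element of `Fin (2k)` representing the odd number `2m−1` (with `m` 1-based;
using 0-based values, the odd numbers `1, 3, …, 2k−1` are the elements of even value
`0, 2, …, 2k−2`). -/
def oddIdx {k : ℕ} (m : Fin k) : Fin (2 * k) :=
  ⟨2 * m.val, by have := m.isLt; omega⟩

/-- The element of `Fin (2k)` representing the even number `2n` (0-based value `2n−1`). -/
def evenIdx {k : ℕ} (n : Fin k) : Fin (2 * k) :=
  ⟨2 * n.val + 1, by have := n.isLt; omega⟩

/-- A permutation of `{1, …, 2k}` is parity-swapping if it maps every odd number to an
even number (and hence every even number to an odd number).  In terms of 0-based values,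
elements of even value go to elements of odd value. -/
def ParitySwapping {k : ℕ} (s : Equiv.Perm (Fin (2 * k))) : Prop :=
  ∀ i : Fin (2 * k), i.val % 2 = 0 → (s i).val % 2 = 1

/-- A permutation of `{1, …, 2k}` is parity-preserving if it maps odd numbers to odd
numbers and even numbers to even numbers. -/
def ParityPreserving {k : ℕ} (σ : Equiv.Perm (Fin (2 * k))) : Prop :=
  ∀ i : Fin (2 * k), (σ i).val % 2 = i.val % 2

/-!
Split `{1, …, 2k}` into its odd and even halves, `Fin k ⊕ Fin k`. A parity-preserving
permutation becomes `sumCongr α β`, and a parity-swapping `s` becomes the cross permutation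
`inl m ↦ inr (σ₁ m)`, `inr n ↦ inl (σ₂ n)`. Conjugating the cross permutation of `(σ₁, σ₂)` by
`sumCongr α β` gives that of `(β σ₁ α⁻¹, α σ₂ β⁻¹)`, whose composite is `α (σ₂ σ₁) α⁻¹`.
Conversely, if `σ₂' σ₁' = τ (σ₂ σ₁) τ⁻¹`, then `α = τ`, `β = σ₁' τ σ₁⁻¹` conjugates `s` to `s'`.
-/

namespace Equiv.Perm

variable {α : Type*}

theorem mem_sumCongrHom_range_iff_isLeft {m n : Type*} [Finite m] [Finite n]
    (p : Perm (m ⊕ n)) : p ∈ (sumCongrHom m n).range ↔ ∀ x, (p x).isLeft = x.isLeft := by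
  constructor
  · rintro ⟨⟨a, b⟩, rfl⟩ (x | x) <;> rfl
  · intro h
    refine mem_sumCongrHom_range_of_perm_mapsTo_inl ?_
    rintro _ ⟨a, rfl⟩
    exact Sum.isLeft_iff.mp (h (.inl a)) |>.imp fun _ h => h.symm

def crossSum (f g : Perm α) : Perm (α ⊕ α) :=
  (sumCongr f g).trans (Equiv.sumComm α α)

@[simp]
theorem crossSum_inl (f g : Perm α) (a : α) : crossSum f g (.inl a) = .inr (f a) := rfl

@[simp]
theorem crossSum_inr (f g : Perm α) (a : α) : crossSum f g (.inr a) = .inl (g a) := rfl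

theorem crossSum_inj {f g f' g' : Perm α} : crossSum f g = crossSum f' g' ↔ f = f' ∧ g = g' := by
  refine ⟨fun h => ⟨?_, ?_⟩, by rintro ⟨rfl, rfl⟩; rfl⟩ <;> ext a
  · simpa using congr($h (.inl a))
  · simpa using congr($h (.inr a))

theorem sumCongr_mul_crossSum_mul_inv (a b f g : Perm α) :
    sumCongr a b * crossSum f g * (sumCongr a b)⁻¹ = crossSum (b * f * a⁻¹) (a * g * b⁻¹) := by
  ext (x | x) <;> simp

theorem exists_sumCongr_conj_crossSum_iff (f g f' g' : Perm α) :
    (∃ p ∈ (sumCongrHom α α).range, crossSum f' g' = p * crossSum f g * p⁻¹) ↔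
      IsConj (g * f) (g' * f') := by
  rw [isConj_iff]
  constructor
  · rintro ⟨_, ⟨⟨a, b⟩, rfl⟩, h⟩
    rw [sumCongrHom_apply, sumCongr_mul_crossSum_mul_inv, crossSum_inj] at h
    obtain ⟨rfl, rfl⟩ := h
    exact ⟨a, by group⟩
  · rintro ⟨c, hc⟩
    refine ⟨sumCongr c (f' * c * f⁻¹), ⟨(c, _), rfl⟩, ?_⟩
    rw [sumCongr_mul_crossSum_mul_inv, crossSum_inj]
    refine ⟨by group, ?_⟩
    calc g' = g' * f' * f'⁻¹ := by group
      _ = c * g * (f' * c * f⁻¹)⁻¹ := by rw [← hc]; group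

end Equiv.Perm

theorem MulEquiv.exists_map_mem_conj_iff {G G' : Type*} [Group G] [Group G'] (φ : G ≃* G')
    (H : Subgroup G') (x y : G) :
    (∃ g, φ g ∈ H ∧ y = g * x * g⁻¹) ↔ ∃ h ∈ H, φ y = h * φ x * h⁻¹ := by
  constructor
  · rintro ⟨g, hg, rfl⟩
    exact ⟨φ g, hg, by simp⟩
  · rintro ⟨h, hh, hy⟩
    exact ⟨φ.symm h, by simpa using hh, φ.injective (by simpa using hy)⟩

open Equiv Equiv.Perm

noncomputable def parityEquiv (k : ℕ) : Fin k ⊕ Fin k ≃ Fin (2 * k) :=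
  Equiv.ofBijective (Sum.elim oddIdx evenIdx) <| by
    refine (Fintype.bijective_iff_injective_and_card _).mpr
      ⟨?_, by simp only [Fintype.card_sum, Fintype.card_fin]; omega⟩
    rintro (a | a) (b | b) h <;>
      simp only [Sum.elim_inl, Sum.elim_inr, oddIdx, evenIdx, Fin.ext_iff, Sum.inl.injEq,
        Sum.inr.injEq, reduceCtorEq] at h ⊢ <;>
      omega

section parityEquiv

variable {k : ℕ}

@[simp]
theorem parityEquiv_inl (m : Fin k) : parityEquiv k (.inl m) = oddIdx m := rfl

@[simp]
theorem parityEquiv_inr (n : Fin k) : parityEquiv k (.inr n) = evenIdx n := rfl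

theorem isLeft_parityEquiv_symm (i : Fin (2 * k)) :
    ((parityEquiv k).symm i).isLeft = decide (i.val % 2 = 0) := by
  obtain ⟨x, rfl⟩ := (parityEquiv k).surjective i
  rw [symm_apply_apply]
  cases x <;> simp [oddIdx, evenIdx]

theorem parityPreserving_iff_mem_sumCongrHom_range (σ : Perm (Fin (2 * k))) :
    ParityPreserving σ ↔
      (parityEquiv k).symm.permCongr σ ∈ (sumCongrHom (Fin k) (Fin k)).range := by
  rw [mem_sumCongrHom_range_iff_isLeft, (parityEquiv k).forall_congr_left]
  refine forall_congr' fun i => ?_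
  simp only [permCongr_apply, symm_symm, apply_symm_apply, isLeft_parityEquiv_symm,
    decide_eq_decide]
  omega

theorem symm_permCongr_parityEquiv_eq_crossSum {s : Perm (Fin (2 * k))} {f g : Perm (Fin k)}
    (hf : ∀ m, s (oddIdx m) = evenIdx (f m)) (hg : ∀ m, s (evenIdx m) = oddIdx (g m)) :
    (parityEquiv k).symm.permCongr s = crossSum f g := by
  ext (x | x) : 1 <;> simp [Equiv.symm_apply_eq, hf, hg]

end parityEquiv

theorem parity_swapping_conj_iff_general (k : ℕ)
    (s s' : Equiv.Perm (Fin (2 * k)))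
    (σ₁ σ₂ σ₁' σ₂' : Equiv.Perm (Fin k))
    (hσ₁ : ∀ m n : Fin k, σ₁ m = n ↔ s (oddIdx m) = evenIdx n)
    (hσ₂ : ∀ m n : Fin k, σ₂ m = n ↔ s (evenIdx m) = oddIdx n)
    (hσ₁' : ∀ m n : Fin k, σ₁' m = n ↔ s' (oddIdx m) = evenIdx n)
    (hσ₂' : ∀ m n : Fin k, σ₂' m = n ↔ s' (evenIdx m) = oddIdx n) :
    (∃ σ : Equiv.Perm (Fin (2 * k)), ParityPreserving σ ∧ s' = σ * s * σ⁻¹) ↔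
      (∃ τ : Equiv.Perm (Fin k), σ₂' * σ₁' = τ * (σ₂ * σ₁) * τ⁻¹) := by
  have hs := symm_permCongr_parityEquiv_eq_crossSum (fun m => (hσ₁ m _).mp rfl)
    (fun m => (hσ₂ m _).mp rfl)
  have hs' := symm_permCongr_parityEquiv_eq_crossSum (fun m => (hσ₁' m _).mp rfl)
    (fun m => (hσ₂' m _).mp rfl)
  simp_rw [parityPreserving_iff_mem_sumCongrHom_range, ← permCongrHom_coe]
  rw [MulEquiv.exists_map_mem_conj_iff, permCongrHom_coe, hs, hs',
    exists_sumCongr_conj_crossSum_iff, isConj_iff]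
  simp_rw [eq_comm]

/-- for parity-swapping `s, s' ∈ S_{2k}`, with `σ₁^s, σ₂^s ∈ S_k` defined by
`σ₁^s(m) = n ↔ s(2m−1) = 2n` and `σ₂^s(m) = n ↔ s(2m) = 2n−1`, and `σ̃^s = σ₂^s ∘ σ₁^s`:
`s'` is conjugate to `s` by a parity-preserving permutation if and only if `σ̃^{s'}` and
`σ̃^s` are conjugate in `S_k`. -/
theorem parity_swapping_conj_iff (k : ℕ) (hk : 1 ≤ k)
    (s s' : Equiv.Perm (Fin (2 * k)))
    (hs : ParitySwapping s) (hs' : ParitySwapping s')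
    (σ₁ σ₂ σ₁' σ₂' : Equiv.Perm (Fin k))
    (hσ₁ : ∀ m n : Fin k, σ₁ m = n ↔ s (oddIdx m) = evenIdx n)
    (hσ₂ : ∀ m n : Fin k, σ₂ m = n ↔ s (evenIdx m) = oddIdx n)
    (hσ₁' : ∀ m n : Fin k, σ₁' m = n ↔ s' (oddIdx m) = evenIdx n)
    (hσ₂' : ∀ m n : Fin k, σ₂' m = n ↔ s' (evenIdx m) = oddIdx n) :
    (∃ σ : Equiv.Perm (Fin (2 * k)), ParityPreserving σ ∧ s' = σ * s * σ⁻¹) ↔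
      (∃ τ : Equiv.Perm (Fin k), σ₂' * σ₁' = τ * (σ₂ * σ₁) * τ⁻¹) :=
  parity_swapping_conj_iff_general k s s' σ₁ σ₂ σ₁' σ₂' hσ₁ hσ₂ hσ₁' hσ₂'
end

section
/- For every smooth function h : ℂ^{n+2} → ℂ, the identity Δ̃(r·h) = r·Δ̃h + (n+2)·h + 𝔼h + 𝔼̄h holds on ℂ^{n+2}, where 𝔼h := Σ_A z^A·∂_A h and 𝔼̄h := Σ_A conj(z^A)·∂_Ā h are the holomorphic and antiholomorphic Euler operators. In particular, if h is bihomogeneous of bidegree (w₁−1, w₂−1) (so that 𝔼h = (w₁−1)h and 𝔼̄h = (w₂−1)h), then Δ̃(r·h) = r·Δ̃h + (n+w₁+w₂)·h. -/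
open scoped ComplexConjugate BigOperators Pointwise

noncomputable section

/-- The quadratic function `r(z) := g(z,z)`. -/
def rQuad {n : ℕ} (h : Matrix (Fin n) (Fin n) ℂ) (z : Amb n) : ℂ :=
  ∑ A : AmbIdx n, ∑ B : AmbIdx n, conj (z A) * ambG h A B * z B

/-- The holomorphic Euler operator `𝔼h := Σ_A z^A·∂_A h`. -/
def eulerHol {n : ℕ} (f : Amb n → ℂ) (z : Amb n) : ℂ :=
  ∑ A : AmbIdx n, z A * wirt f A z

/-- The antiholomorphic Euler operator `𝔼̄h := Σ_A conj(z^A)·∂_Ā h`. -/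
def eulerAntihol {n : ℕ} (f : Amb n → ℂ) (z : Amb n) : ℂ :=
  ∑ A : AmbIdx n, conj (z A) * wirtBar f A z

namespace AmbLapAux

variable {n : ℕ} {h : Matrix (Fin n) (Fin n) ℂ}

lemma wirt_sum {ι : Type*} (s : Finset ι) (g : ι → Amb n → ℂ) (A : AmbIdx n) (z : Amb n)
    (hg : ∀ i ∈ s, DifferentiableAt ℝ (g i) z) :
    wirt (fun w => ∑ i ∈ s, g i w) A z = ∑ i ∈ s, wirt (g i) A z := by
  simp only [wirt, fderiv_fun_sum hg, ContinuousLinearMap.coe_sum', Finset.sum_apply,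
    Finset.mul_sum, ← Finset.sum_sub_distrib]

lemma wirtBar_sum {ι : Type*} (s : Finset ι) (g : ι → Amb n → ℂ) (A : AmbIdx n) (z : Amb n)
    (hg : ∀ i ∈ s, DifferentiableAt ℝ (g i) z) :
    wirtBar (fun w => ∑ i ∈ s, g i w) A z = ∑ i ∈ s, wirtBar (g i) A z := by
  simp only [wirtBar, fderiv_fun_sum hg, ContinuousLinearMap.coe_sum', Finset.sum_apply,
    Finset.mul_sum, ← Finset.sum_add_distrib]

lemma wirt_add {f g : Amb n → ℂ} {A : AmbIdx n} {z : Amb n} (hf : DifferentiableAt ℝ f z)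
    (hg : DifferentiableAt ℝ g z) :
    wirt (fun w => f w + g w) A z = wirt f A z + wirt g A z := by
  simp only [wirt, fderiv_fun_add hf hg, ContinuousLinearMap.add_apply]; ring

lemma wirt_mul {f g : Amb n → ℂ} {A : AmbIdx n} {z : Amb n} (hf : DifferentiableAt ℝ f z)
    (hg : DifferentiableAt ℝ g z) :
    wirt (fun w => f w * g w) A z = wirt f A z * g z + f z * wirt g A z := by
  simp only [wirt, fderiv_fun_mul hf hg, ContinuousLinearMap.add_apply,
    ContinuousLinearMap.smul_apply, smul_eq_mul]; ring

lemma wirtBar_mul {f g : Amb n → ℂ} {A : AmbIdx n} {z : Amb n} (hf : DifferentiableAt ℝ f z)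
    (hg : DifferentiableAt ℝ g z) :
    wirtBar (fun w => f w * g w) A z = wirtBar f A z * g z + f z * wirtBar g A z := by
  simp only [wirtBar, fderiv_fun_mul hf hg, ContinuousLinearMap.add_apply,
    ContinuousLinearMap.smul_apply, smul_eq_mul]; ring

lemma wirt_constf (c : ℂ) (A : AmbIdx n) (z : Amb n) : wirt (fun _ => c) A z = 0 := by
  simp [wirt, fderiv_const]

lemma wirtBar_constf (c : ℂ) (A : AmbIdx n) (z : Amb n) : wirtBar (fun _ => c) A z = 0 := by
  simp [wirtBar, fderiv_const]

lemma fderiv_eval (C : AmbIdx n) (z : Amb n) :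
    fderiv ℝ (fun w : Amb n => w C) z = ContinuousLinearMap.proj C :=
  (ContinuousLinearMap.proj (R := ℝ) (φ := fun _ : AmbIdx n => ℂ) C).fderiv

lemma fderiv_conj_eval (C : AmbIdx n) (z : Amb n) :
    fderiv ℝ (fun w : Amb n => (starRingEnd ℂ) (w C)) z =
      (Complex.conjCLE.toContinuousLinearMap).comp (ContinuousLinearMap.proj C) :=
  ((Complex.conjCLE.toContinuousLinearMap).comp
    (ContinuousLinearMap.proj (R := ℝ) (φ := fun _ : AmbIdx n => ℂ) C)).fderiv

set_option linter.unnecessarySeqFocus false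

lemma wirt_eval (C A : AmbIdx n) (z : Amb n) :
    wirt (fun w => w C) A z = if A = C then 1 else 0 := by
  simp only [wirt, fderiv_eval, ContinuousLinearMap.proj_apply, Pi.single_apply]
  by_cases hAC : C = A <;> simp [hAC, eq_comm] <;> norm_num

lemma wirtBar_eval (C A : AmbIdx n) (z : Amb n) :
    wirtBar (fun w => w C) A z = 0 := by
  simp only [wirtBar, fderiv_eval, ContinuousLinearMap.proj_apply, Pi.single_apply]
  by_cases hAC : C = A <;> simp [hAC]

lemma wirt_conj_eval (C A : AmbIdx n) (z : Amb n) :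
    wirt (fun w => conj (w C)) A z = 0 := by
  simp only [wirt, fderiv_conj_eval, ContinuousLinearMap.comp_apply,
    ContinuousLinearMap.proj_apply, ContinuousLinearEquiv.coe_coe, Complex.conjCLE_apply,
    Pi.single_apply]
  by_cases hAC : C = A <;> simp [hAC]

lemma wirtBar_conj_eval (C A : AmbIdx n) (z : Amb n) :
    wirtBar (fun w => conj (w C)) A z = if A = C then 1 else 0 := by
  simp only [wirtBar, fderiv_conj_eval, ContinuousLinearMap.comp_apply,
    ContinuousLinearMap.proj_apply, ContinuousLinearEquiv.coe_coe, Complex.conjCLE_apply,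
    Pi.single_apply]
  by_cases hAC : C = A <;> simp [hAC, eq_comm] <;> norm_num

lemma diff_eval (C : AmbIdx n) : Differentiable ℝ (fun w : Amb n => w C) :=
  (ContinuousLinearMap.proj (R := ℝ) (φ := fun _ : AmbIdx n => ℂ) C).differentiable

lemma diff_conj_eval (C : AmbIdx n) : Differentiable ℝ (fun w : Amb n => conj (w C)) :=
  ((Complex.conjCLE.toContinuousLinearMap).comp
    (ContinuousLinearMap.proj (R := ℝ) (φ := fun _ : AmbIdx n => ℂ) C)).differentiable

lemma diff_rQuad : Differentiable ℝ (rQuad h) := by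
  unfold rQuad
  exact Differentiable.fun_sum fun A _ => Differentiable.fun_sum fun B _ =>
    ((diff_conj_eval A).fun_mul (differentiable_const _)).fun_mul (diff_eval B)

lemma diff_fderiv_apply {f : Amb n → ℂ} (hf : ContDiff ℝ (⊤ : ℕ∞) f) (v : Amb n) :
    Differentiable ℝ (fun z => fderiv ℝ f z v) :=
  (ContinuousLinearMap.apply ℝ ℂ v).differentiable.comp
    ((hf.fderiv_right (m := (⊤ : ℕ∞)) (by simp)).differentiable (by simp))

lemma diff_wirtBar {f : Amb n → ℂ} (hf : ContDiff ℝ (⊤ : ℕ∞) f) (B : AmbIdx n) :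
    Differentiable ℝ (wirtBar f B) := by
  unfold wirtBar
  exact (differentiable_const _).mul ((diff_fderiv_apply hf _).add
    ((differentiable_const _).mul (diff_fderiv_apply hf _)))

lemma wirt_rQuad (C : AmbIdx n) (z : Amb n) :
    wirt (rQuad h) C z = ∑ A : AmbIdx n, conj (z A) * ambG h A C := by
  unfold rQuad
  rw [wirt_sum _ (fun A w => ∑ B : AmbIdx n, conj (w A) * ambG h A B * w B) _ _ (fun A _ => Differentiable.differentiableAt <|
    Differentiable.fun_sum fun B _ =>
      ((diff_conj_eval A).fun_mul (differentiable_const _)).fun_mul (diff_eval B))]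
  refine Finset.sum_congr rfl fun A _ => ?_
  rw [wirt_sum _ _ _ _ (fun B _ => Differentiable.differentiableAt <|
      ((diff_conj_eval A).fun_mul (differentiable_const _)).fun_mul (diff_eval B))]
  have step : ∀ B : AmbIdx n,
      wirt (fun w => conj (w A) * ambG h A B * w B) C z =
        conj (z A) * ambG h A B * (if C = B then 1 else 0) := by
    intro B
    rw [wirt_mul (((diff_conj_eval A).fun_mul (differentiable_const _)).differentiableAt)
      ((diff_eval B).differentiableAt)]
    rw [wirt_mul ((diff_conj_eval A).differentiableAt) (differentiableAt_const _)]
    simp [wirt_conj_eval, wirt_constf, wirt_eval]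
  simp only [step]
  simp [Finset.sum_ite_eq, mul_ite]

lemma wirtBar_rQuad (C : AmbIdx n) (z : Amb n) :
    wirtBar (rQuad h) C z = ∑ B : AmbIdx n, ambG h C B * z B := by
  unfold rQuad
  rw [wirtBar_sum _ (fun A w => ∑ B : AmbIdx n, conj (w A) * ambG h A B * w B) _ _ (fun A _ => Differentiable.differentiableAt <|
    Differentiable.fun_sum fun B _ =>
      ((diff_conj_eval A).fun_mul (differentiable_const _)).fun_mul (diff_eval B))]
  have step : ∀ A B : AmbIdx n,
      wirtBar (fun w => conj (w A) * ambG h A B * w B) C z =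
        (if C = A then 1 else 0) * ambG h A B * z B := by
    intro A B
    rw [wirtBar_mul (((diff_conj_eval A).fun_mul (differentiable_const _)).differentiableAt)
      ((diff_eval B).differentiableAt)]
    rw [wirtBar_mul ((diff_conj_eval A).differentiableAt) (differentiableAt_const _)]
    simp [wirtBar_conj_eval, wirtBar_constf, wirtBar_eval]
  have inner : ∀ A : AmbIdx n,
      wirtBar (fun w => ∑ B : AmbIdx n, conj (w A) * ambG h A B * w B) C z
        = ∑ B : AmbIdx n, (if C = A then 1 else 0) * ambG h A B * z B := by
    intro A
    rw [wirtBar_sum _ _ _ _ (fun B _ => Differentiable.differentiableAt <|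
      ((diff_conj_eval A).fun_mul (differentiable_const _)).fun_mul (diff_eval B))]
    exact Finset.sum_congr rfl fun B _ => step A B
  simp only [inner]
  rw [Finset.sum_comm]
  refine Finset.sum_congr rfl fun B _ => ?_
  simp [Finset.sum_ite_eq, ite_mul]

lemma ambG_mul_ambG_inv (hnd : IsUnit h.det) : ambG h * ambG h⁻¹ = 1 := by
  have hh : h * h⁻¹ = 1 := Matrix.mul_nonsing_inv h hnd
  ext A B
  rcases A with u | a | u <;> rcases B with v | b | v <;>
    simp [Matrix.mul_apply, ambG, Fintype.sum_sum_type, Matrix.one_apply]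
  have := congrFun (congrFun hh a) b
  simpa [Matrix.mul_apply, Matrix.one_apply] using this

lemma second_deriv {f : Amb n → ℂ} (hf : ContDiff ℝ (⊤ : ℕ∞) f) (A B : AmbIdx n) (z : Amb n) :
    wirt (wirtBar (fun w => rQuad h w * f w) B) A z =
      ambG h B A * f z + ((∑ C : AmbIdx n, ambG h B C * z C) * wirt f A z +
        ((∑ C : AmbIdx n, conj (z C) * ambG h C A) * wirtBar f B z +
          rQuad h z * wirt (wirtBar f B) A z)) := by
  have hfd : Differentiable ℝ f := hf.differentiable (by simp)
  have hrw : wirtBar (fun w => rQuad h w * f w) B =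
      fun w => (∑ C : AmbIdx n, ambG h B C * w C) * f w + rQuad h w * wirtBar f B w := by
    funext w
    rw [wirtBar_mul diff_rQuad.differentiableAt hfd.differentiableAt, wirtBar_rQuad]
  rw [hrw]
  have d1 : DifferentiableAt ℝ (fun w : Amb n => (∑ C : AmbIdx n, ambG h B C * w C) * f w) z :=
    ((Differentiable.fun_sum fun C _ => (differentiable_const _).fun_mul (diff_eval C)).mul
      hfd).differentiableAt
  have d2 : DifferentiableAt ℝ (fun w : Amb n => rQuad h w * wirtBar f B w) z :=
    (diff_rQuad.fun_mul (diff_wirtBar hf B)).differentiableAt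
  rw [wirt_add d1 d2]
  rw [wirt_mul ((Differentiable.fun_sum fun C _ =>
      (differentiable_const _).fun_mul (diff_eval C)).differentiableAt) hfd.differentiableAt]
  rw [wirt_mul diff_rQuad.differentiableAt ((diff_wirtBar hf B).differentiableAt)]
  have hlin : wirt (fun w : Amb n => ∑ C : AmbIdx n, ambG h B C * w C) A z = ambG h B A := by
    rw [wirt_sum _ _ _ _ (fun C _ =>
      ((differentiable_const _).fun_mul (diff_eval C)).differentiableAt)]
    have : ∀ C : AmbIdx n, wirt (fun w : Amb n => ambG h B C * w C) A z =
        ambG h B C * (if A = C then 1 else 0) := by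
      intro C
      rw [wirt_mul (differentiableAt_const _) ((diff_eval C).differentiableAt)]
      simp [wirt_constf, wirt_eval]
    simp only [this]
    simp [Finset.sum_ite_eq, mul_ite]
  rw [hlin, wirt_rQuad]
  ring

end AmbLapAux

open AmbLapAux

/-- for every smooth `h : ℂ^{n+2} → ℂ`,
`Δ̃(r·h) = r·Δ̃h + (n+2)·h + 𝔼h + 𝔼̄h`; in particular, if `h` is bihomogeneous of
bidegree `(w₁−1, w₂−1)` (so `𝔼h = (w₁−1)h` and `𝔼̄h = (w₂−1)h`), then
`Δ̃(r·h) = r·Δ̃h + (n+w₁+w₂)·h`. -/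
theorem ambLap_r_mul
    (n : ℕ) (hn : 1 ≤ n) (h : Matrix (Fin n) (Fin n) ℂ)
    (hherm : h.IsHermitian) (hnd : IsUnit h.det)
    (f : Amb n → ℂ) (hf : ContDiff ℝ (⊤ : ℕ∞) f) :
    (∀ z : Amb n,
        ambLap h (fun w => rQuad h w * f w) z =
          rQuad h z * ambLap h f z + ((n : ℂ) + 2) * f z +
            eulerHol f z + eulerAntihol f z) ∧
      ∀ w₁ w₂ : ℂ,
        (∀ z : Amb n, eulerHol f z = (w₁ - 1) * f z) →
        (∀ z : Amb n, eulerAntihol f z = (w₂ - 1) * f z) →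
        ∀ z : Amb n,
          ambLap h (fun w => rQuad h w * f w) z =
            rQuad h z * ambLap h f z + ((n : ℂ) + w₁ + w₂) * f z := by
  have hGG : ambG h * (ambG h)⁻¹ = 1 := by
    rw [Matrix.inv_eq_right_inv (ambG_mul_ambG_inv hnd)]
    exact ambG_mul_ambG_inv hnd
  have hGinvG : (ambG h)⁻¹ * ambG h = 1 := mul_eq_one_comm.mp hGG
  have delta1 : ∀ A C : AmbIdx n, ∑ B : AmbIdx n, (ambG h)⁻¹ A B * ambG h B C =
      if A = C then 1 else 0 := by
    intro A C
    have := congrFun (congrFun hGinvG A) C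
    simpa [Matrix.mul_apply, Matrix.one_apply] using this
  have delta2 : ∀ C B : AmbIdx n, ∑ A : AmbIdx n, ambG h C A * (ambG h)⁻¹ A B =
      if C = B then 1 else 0 := by
    intro C B
    have := congrFun (congrFun hGG C) B
    simpa [Matrix.mul_apply, Matrix.one_apply] using this
  have main : ∀ z : Amb n,
      ambLap h (fun w => rQuad h w * f w) z =
        rQuad h z * ambLap h f z + ((n : ℂ) + 2) * f z +
          eulerHol f z + eulerAntihol f z := by
    intro z
    have expand : ambLap h (fun w => rQuad h w * f w) z =
        (∑ A : AmbIdx n, ∑ B : AmbIdx n, (ambG h)⁻¹ A B * (ambG h B A * f z)) +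
        ((∑ A : AmbIdx n, ∑ B : AmbIdx n, (ambG h)⁻¹ A B *
            ((∑ C : AmbIdx n, ambG h B C * z C) * wirt f A z)) +
        ((∑ A : AmbIdx n, ∑ B : AmbIdx n, (ambG h)⁻¹ A B *
            ((∑ C : AmbIdx n, conj (z C) * ambG h C A) * wirtBar f B z)) +
        (∑ A : AmbIdx n, ∑ B : AmbIdx n, (ambG h)⁻¹ A B *
            (rQuad h z * wirt (wirtBar f B) A z)))) := by
      unfold ambLap
      simp only [second_deriv hf, mul_add, Finset.sum_add_distrib]
    have S1 : ∑ A : AmbIdx n, ∑ B : AmbIdx n, (ambG h)⁻¹ A B * (ambG h B A * f z)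
        = ((n : ℂ) + 2) * f z := by
      have e : ∀ A : AmbIdx n, ∑ B : AmbIdx n, (ambG h)⁻¹ A B * (ambG h B A * f z)
          = ((1 : Matrix (AmbIdx n) (AmbIdx n) ℂ) A A) * f z := by
        intro A
        rw [← hGinvG]
        simp only [Matrix.mul_apply, Finset.sum_mul]
        exact Finset.sum_congr rfl fun B _ => (mul_assoc _ _ _).symm
      simp only [e, Matrix.one_apply_eq, one_mul, Finset.sum_const, Finset.card_univ,
        Fintype.card_sum, Fintype.card_fin, Fintype.card_unit, nsmul_eq_mul]
      push_cast; ring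
    have S2 : ∑ A : AmbIdx n, ∑ B : AmbIdx n, (ambG h)⁻¹ A B *
        ((∑ C : AmbIdx n, ambG h B C * z C) * wirt f A z) = eulerHol f z := by
      unfold eulerHol
      refine Finset.sum_congr rfl fun A _ => ?_
      have e1 : ∑ B : AmbIdx n, (ambG h)⁻¹ A B *
          ((∑ C : AmbIdx n, ambG h B C * z C) * wirt f A z)
          = (∑ B : AmbIdx n, (ambG h)⁻¹ A B * ∑ C : AmbIdx n, ambG h B C * z C) *
              wirt f A z := by
        rw [Finset.sum_mul]
        exact Finset.sum_congr rfl fun B _ => (mul_assoc _ _ _).symm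
      have e2 : ∑ B : AmbIdx n, (ambG h)⁻¹ A B * ∑ C : AmbIdx n, ambG h B C * z C = z A := by
        simp_rw [Finset.mul_sum]
        rw [Finset.sum_comm]
        have e3 : ∀ C : AmbIdx n, ∑ B : AmbIdx n, (ambG h)⁻¹ A B * (ambG h B C * z C)
            = (if A = C then 1 else 0) * z C := by
          intro C
          rw [← delta1 A C, Finset.sum_mul]
          exact Finset.sum_congr rfl fun B _ => (mul_assoc _ _ _).symm
        simp only [e3]
        simp [Finset.sum_ite_eq, ite_mul]
      rw [e1, e2]
    have S3 : ∑ A : AmbIdx n, ∑ B : AmbIdx n, (ambG h)⁻¹ A B *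
        ((∑ C : AmbIdx n, conj (z C) * ambG h C A) * wirtBar f B z) = eulerAntihol f z := by
      unfold eulerAntihol
      rw [Finset.sum_comm]
      refine Finset.sum_congr rfl fun B _ => ?_
      have e1 : ∑ A : AmbIdx n, (ambG h)⁻¹ A B *
          ((∑ C : AmbIdx n, conj (z C) * ambG h C A) * wirtBar f B z)
          = (∑ A : AmbIdx n, (ambG h)⁻¹ A B * ∑ C : AmbIdx n, conj (z C) * ambG h C A) *
              wirtBar f B z := by
        rw [Finset.sum_mul]
        exact Finset.sum_congr rfl fun A _ => (mul_assoc _ _ _).symm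
      have e2 : ∑ A : AmbIdx n, (ambG h)⁻¹ A B * ∑ C : AmbIdx n, conj (z C) * ambG h C A
          = conj (z B) := by
        simp_rw [Finset.mul_sum]
        rw [Finset.sum_comm]
        have e3 : ∀ C : AmbIdx n, ∑ A : AmbIdx n, (ambG h)⁻¹ A B * (conj (z C) * ambG h C A)
            = conj (z C) * (if C = B then 1 else 0) := by
          intro C
          rw [← delta2 C B, Finset.mul_sum]
          exact Finset.sum_congr rfl fun A _ => by ring
        simp only [e3]
        simp [Finset.sum_ite_eq', mul_ite]
      rw [e1, e2]
    have S4 : ∑ A : AmbIdx n, ∑ B : AmbIdx n, (ambG h)⁻¹ A B *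
        (rQuad h z * wirt (wirtBar f B) A z) = rQuad h z * ambLap h f z := by
      unfold ambLap
      rw [Finset.mul_sum]
      refine Finset.sum_congr rfl fun A _ => ?_
      rw [Finset.mul_sum]
      exact Finset.sum_congr rfl fun B _ => by ring
    rw [expand, S1, S2, S3, S4]
    ring
  refine ⟨main, fun w₁ w₂ h1 h2 z => ?_⟩
  rw [main z, h1 z, h2 z]
  ring
end
end

section
/- Let λ be a partition of k with depth(λ) = d, and let A be any bijective filling of the Young diagram of λ with {1,…,k}. For any subset S ⊆ {1,…,k} with |S| = d + 1, define the antisymmetrizer Alt_S := Σ_π sgn(π)·π ∈ ℂ[S_k], the sum over all permutations π ∈ S_k fixing every element of the complement of S pointwise. Then Alt_S · c(A) · r(A) = 0 in the group algebra ℂ[S_k]. In particular, skew-symmetrizing the tensor c(A)·r(A)·T over any depth(λ)+1 index positions gives zero, for every T ∈ ⊗^k ℂ^n. -/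
open scoped TensorProduct Classical

noncomputable section

/-- `⊗^k ℂⁿ`. -/
abbrev TensPow (n k : ℕ) := ⨂[ℂ] _ : Fin k, (Fin n → ℂ)

/-- The place-permutation action `P_π(v₁⊗…⊗v_k) = v_{π⁻¹(1)}⊗…⊗v_{π⁻¹(k)}`. -/
def permTens (n k : ℕ) (π : Equiv.Perm (Fin k)) : TensPow n k →ₗ[ℂ] TensPow n k :=
  (PiTensorProduct.reindex ℂ (fun _ : Fin k => (Fin n → ℂ)) π).toLinearMap

/-- The linear extension of the place-permutation action to the group algebra
`ℂ[S_k]`. -/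
def algAct (n k : ℕ) (x : MonoidAlgebra ℂ (Equiv.Perm (Fin k))) (T : TensPow n k) :
    TensPow n k :=
  x.coeff.sum fun π c => c • permTens n k π T

/-- A (bijective) filling of the Young diagram of `μ` with `{1, …, k}`: a bijection
from the cells of `μ` to `Fin k`. -/
abbrev Filling (μ : YoungDiagram) (k : ℕ) := {c : ℕ × ℕ // c ∈ μ.cells} ≃ Fin k

/-- `π` preserves each row of the filling `A` setwise. -/
def RowPerm {μ : YoungDiagram} {k : ℕ} (A : Filling μ k) (π : Equiv.Perm (Fin k)) :
    Prop :=
  ∀ i : Fin k, (A.symm (π i)).val.1 = (A.symm i).val.1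

/-- `π` preserves each column of the filling `A` setwise. -/
def ColPerm {μ : YoungDiagram} {k : ℕ} (A : Filling μ k) (π : Equiv.Perm (Fin k)) :
    Prop :=
  ∀ i : Fin k, (A.symm (π i)).val.2 = (A.symm i).val.2

/-- The row symmetrizer `r(A) = Σ_{π ∈ Row(A)} π ∈ ℂ[S_k]`. -/
def rowSym {μ : YoungDiagram} {k : ℕ} (A : Filling μ k) :
    MonoidAlgebra ℂ (Equiv.Perm (Fin k)) :=
  ∑ π ∈ Finset.univ.filter (RowPerm A), MonoidAlgebra.single π (1 : ℂ)

/-- The column antisymmetrizer `c(A) = Σ_{π ∈ Col(A)} sgn(π)·π ∈ ℂ[S_k]`. -/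
def colSym {μ : YoungDiagram} {k : ℕ} (A : Filling μ k) :
    MonoidAlgebra ℂ (Equiv.Perm (Fin k)) :=
  ∑ π ∈ Finset.univ.filter (ColPerm A),
    MonoidAlgebra.single π (((Equiv.Perm.sign π : ℤ) : ℂ))

/-- The antisymmetrizer `Alt_S = Σ_π sgn(π)·π ∈ ℂ[S_k]`, the sum over all permutations
fixing every element of the complement of `S` pointwise. -/
def altSym (k : ℕ) (S : Finset (Fin k)) : MonoidAlgebra ℂ (Equiv.Perm (Fin k)) :=
  ∑ π ∈ Finset.univ.filter (fun π : Equiv.Perm (Fin k) => ∀ i : Fin k, i ∉ S → π i = i),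
    MonoidAlgebra.single π (((Equiv.Perm.sign π : ℤ) : ℂ))

/-!
Fix `p ∈ S_k`. Since `A` has only `depth(λ)` rows, `S` contains distinct `i, j` with `p⁻¹ i` and
`p⁻¹ j` in the same row of `A`. The transposition `t = (i j)` satisfies `Alt_S · t = -Alt_S`,
and `t p = p t'` with `t' = (p⁻¹ i  p⁻¹ j) ∈ Row(A)`, so `t' · r(A) = r(A)`. Hence
`X = Alt_S · p · r(A) = Alt_S · p t' · r(A) = Alt_S · t p · r(A) = -X`, so `X = 0`, and by
linearity `Alt_S · x · r(A) = 0` for every `x ∈ ℂ[S_k]`, in particular for `x = c(A)`.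
-/

namespace YoungSymmetrizer

open Equiv MonoidAlgebra

variable {k : ℕ} {μ : YoungDiagram}

lemma altSym_mul_single_swap {S : Finset (Fin k)} {i j : Fin k} (hi : i ∈ S) (hj : j ∈ S)
    (hij : i ≠ j) : altSym k S * single (swap i j) (1 : ℂ) = -altSym k S := by
  rw [altSym, Finset.sum_mul, ← Finset.sum_neg_distrib]
  refine Finset.sum_equiv (Equiv.mulRight (swap i j)) (fun π => ?_) (fun π _ => ?_)
  · have hfix : ∀ x ∉ S, swap i j x = x := fun x hx =>
      swap_apply_of_ne_of_ne (by rintro rfl; exact hx hi) (by rintro rfl; exact hx hj)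
    simp only [Finset.mem_filter, Finset.mem_univ, true_and, coe_mulRight, Perm.mul_apply]
    exact forall_congr' fun x => imp_congr_right fun hx => by rw [hfix x hx]
  · simp [single_mul_single, Perm.sign_swap hij]

lemma rowPerm_swap {A : Filling μ k} {i j : Fin k}
    (h : (A.symm i).val.1 = (A.symm j).val.1) : RowPerm A (swap i j) := by
  intro x
  rcases eq_or_ne x i with rfl | hxi
  · rw [swap_apply_left, h]
  rcases eq_or_ne x j with rfl | hxj
  · rw [swap_apply_right, h]
  · rw [swap_apply_of_ne_of_ne hxi hxj]

lemma rowPerm_mul_left_iff {A : Filling μ k} {t π : Perm (Fin k)} (ht : RowPerm A t) :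
    RowPerm A (t * π) ↔ RowPerm A π :=
  forall_congr' fun i => by rw [Perm.mul_apply, ht]

lemma single_mul_rowSym {A : Filling μ k} {t : Perm (Fin k)} (ht : RowPerm A t) :
    single t (1 : ℂ) * rowSym A = rowSym A := by
  rw [rowSym, Finset.mul_sum]
  refine Finset.sum_equiv (Equiv.mulLeft t) (fun π => ?_) (fun π _ => ?_)
  · simp only [Finset.mem_filter, Finset.mem_univ, true_and, coe_mulLeft,
      rowPerm_mul_left_iff ht]
  · simp [single_mul_single]

lemma exists_ne_row_eq_of_colLen_lt (A : Filling μ k) {S : Finset (Fin k)}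
    (hS : μ.colLen 0 < S.card) :
    ∃ i ∈ S, ∃ j ∈ S, i ≠ j ∧ (A.symm i).val.1 = (A.symm j).val.1 := by
  refine Finset.exists_ne_map_eq_of_card_lt_of_maps_to (t := Finset.range (μ.colLen 0))
    (by rwa [Finset.card_range]) fun x _ => ?_
  have hcell : (A.symm x).val ∈ μ := (A.symm x).2
  rw [Finset.mem_coe, Finset.mem_range, ← YoungDiagram.mem_iff_lt_colLen]
  exact μ.up_left_mem le_rfl (Nat.zero_le _) hcell

lemma altSym_mul_single_mul_rowSym_eq_zero (A : Filling μ k) {S : Finset (Fin k)}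
    (hS : μ.colLen 0 < S.card) (p : Perm (Fin k)) :
    altSym k S * single p (1 : ℂ) * rowSym A = 0 := by
  obtain ⟨i, hi, j, hj, hij, hrow⟩ := exists_ne_row_eq_of_colLen_lt (A.trans p) hS
  have hconj : swap i j * p = p * swap (p⁻¹ i) (p⁻¹ j) := swap_mul_eq_mul_swap p i j
  have hrowPerm : RowPerm A (swap (p⁻¹ i) (p⁻¹ j)) := rowPerm_swap hrow
  have : IsAddTorsionFree (MonoidAlgebra ℂ (Perm (Fin k))) := .of_module_rat _
  rw [← self_eq_neg]
  calc altSym k S * single p 1 * rowSym A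
      = altSym k S * single p 1 * (single (swap (p⁻¹ i) (p⁻¹ j)) 1 * rowSym A) := by
        rw [single_mul_rowSym hrowPerm]
    _ = altSym k S * single (swap i j) 1 * single p 1 * rowSym A := by
        simp only [mul_assoc]
        rw [← mul_assoc (single p 1), ← mul_assoc (single (swap i j) 1), single_mul_single,
          single_mul_single, hconj]
    _ = -(altSym k S * single p 1 * rowSym A) := by
        rw [altSym_mul_single_swap hi hj hij, neg_mul, neg_mul]

lemma altSym_mul_mul_rowSym_eq_zero (A : Filling μ k) {S : Finset (Fin k)}
    (hS : μ.colLen 0 < S.card) (x : MonoidAlgebra ℂ (Perm (Fin k))) :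
    altSym k S * x * rowSym A = 0 := by
  induction x using MonoidAlgebra.induction_on with
  | of p => exact altSym_mul_single_mul_rowSym_eq_zero A hS p
  | add x y hx hy => rw [mul_add, add_mul, hx, hy, add_zero]
  | smul c x hx => rw [mul_smul_comm, smul_mul_assoc, hx, smul_zero]

end YoungSymmetrizer

def permTensHom (n k : ℕ) : Equiv.Perm (Fin k) →* Module.End ℂ (TensPow n k) where
  toFun := permTens n k
  map_one' := by
    rw [permTens, Equiv.Perm.one_def, PiTensorProduct.reindex_refl]
    rfl
  map_mul' π σ := by
    rw [permTens, Equiv.Perm.mul_def, ← PiTensorProduct.reindex_trans σ π]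
    rfl

lemma algAct_eq_lift (n k : ℕ) (x : MonoidAlgebra ℂ (Equiv.Perm (Fin k))) :
    algAct n k x = MonoidAlgebra.lift ℂ (Module.End ℂ (TensPow n k)) _ (permTensHom n k) x := by
  ext T
  simp [algAct, MonoidAlgebra.lift_apply, Finsupp.sum, permTensHom]

lemma algAct_mul (n k : ℕ) (x y : MonoidAlgebra ℂ (Equiv.Perm (Fin k))) (T : TensPow n k) :
    algAct n k (x * y) T = algAct n k x (algAct n k y T) := by
  rw [algAct_eq_lift, algAct_eq_lift, algAct_eq_lift, map_mul, Module.End.mul_apply]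

theorem alt_young_symmetrizer_eq_zero_general
    (n k : ℕ) (μ : YoungDiagram)
    (A : Filling μ k) (S : Finset (Fin k)) (hS : S.card = μ.colLen 0 + 1) :
    altSym k S * colSym A * rowSym A = 0 ∧
      ∀ T : TensPow n k,
        algAct n k (altSym k S) (algAct n k (colSym A * rowSym A) T) = 0 := by
  have hzero : altSym k S * colSym A * rowSym A = 0 :=
    YoungSymmetrizer.altSym_mul_mul_rowSym_eq_zero A (by omega) (colSym A)
  refine ⟨hzero, fun T => ?_⟩
  rw [← algAct_mul, ← mul_assoc, hzero]
  simp [algAct]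

/-- let `λ` be a partition of `k` with `depth(λ) = d` and `A` any
bijective filling of its Young diagram with `{1,…,k}`.  For any `S ⊆ {1,…,k}` with
`|S| = d + 1`, `Alt_S · c(A) · r(A) = 0` in `ℂ[S_k]`.  In particular, skew-symmetrizing
the tensor `c(A)·r(A)·T` over any `depth(λ)+1` index positions gives zero, for every
`T ∈ ⊗^k ℂⁿ`. -/
theorem alt_young_symmetrizer_eq_zero
    (n k : ℕ) (hn : 1 ≤ n) (μ : YoungDiagram) (hμ : μ.card = k)
    (A : Filling μ k) (S : Finset (Fin k)) (hS : S.card = μ.colLen 0 + 1) :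
    altSym k S * colSym A * rowSym A = 0 ∧
      ∀ T : TensPow n k,
        algAct n k (altSym k S) (algAct n k (colSym A * rowSym A) T) = 0 :=
  alt_young_symmetrizer_eq_zero_general n k μ A S hS
end
end

section
/- For natural numbers s, m, i define a(s, m, i) := Σ_{j≥0} C(s−i, m−j)·C(i, j)·C(s−j, m), where C(·,·) denotes the binomial coefficient (equal to 0 when the lower entry is negative or exceeds the upper entry). Then for all natural numbers s, k, i with i ≤ s: a(s+1, k+1, i) − a(s+1, k+1, i+1) = a(s, k, i). -/
/-- `a(s, m, i) = Σ_{j ≥ 0} C(s−i, m−j)·C(i, j)·C(s−j, m)`.  With the convention that a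
binomial coefficient vanishes when its lower entry is negative, the terms with `j > m`
vanish, so it suffices to sum over `j ∈ {0, …, m}`; for `j ≤ m` all lower entries are
nonnegative and `Nat.choose` agrees with the stated convention (terms with `j > i`
vanish since `C(i,j) = 0`). -/
def aCoeff (s m i : ℕ) : ℕ :=
  ∑ j ∈ Finset.range (m + 1),
    Nat.choose (s - i) (m - j) * Nat.choose i j * Nat.choose (s - j) m

open Finset in
/-- The key natural-number identity: `a(s+1,k+1,i) = a(s+1,k+1,i+1) + a(s,k,i)`. -/
lemma aCoeff_key (s k i : ℕ) (h : i ≤ s) :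
    aCoeff (s + 1) (k + 1) i = aCoeff (s + 1) (k + 1) (i + 1) + aCoeff s k i := by
  unfold aCoeff
  have hsucc : s + 1 - (i + 1) = s - i := by omega
  rw [hsucc]
  -- Step 1: split the LHS using Pascal on C(s+1-i, k+1-j)
  have L : ∑ j ∈ range (k + 1 + 1),
        (s + 1 - i).choose (k + 1 - j) * i.choose j * (s + 1 - j).choose (k + 1)
      = (∑ j ∈ range (k + 1 + 1),
          (s - i).choose (k + 1 - j) * i.choose j * (s + 1 - j).choose (k + 1))
        + ∑ j ∈ range (k + 1),
          (s - i).choose (k - j) * i.choose j * (s + 1 - j).choose (k + 1) := by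
    rw [Finset.sum_range_succ, Finset.sum_range_succ
      (f := fun j => (s - i).choose (k + 1 - j) * i.choose j * (s + 1 - j).choose (k + 1))]
    have hterm : ∀ j ∈ range (k + 1),
        (s + 1 - i).choose (k + 1 - j) * i.choose j * (s + 1 - j).choose (k + 1)
        = (s - i).choose (k + 1 - j) * i.choose j * (s + 1 - j).choose (k + 1)
          + (s - i).choose (k - j) * i.choose j * (s + 1 - j).choose (k + 1) := by
      intro j hj
      rw [mem_range] at hj
      have h1 : s + 1 - i = (s - i) + 1 := by omega
      have h2 : k + 1 - j = (k - j) + 1 := by omega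
      have p : (s - i + 1).choose (k - j + 1)
          = (s - i).choose (k - j) + (s - i).choose (k - j + 1) :=
        Nat.choose_succ_succ _ _
      rw [h1, h2, p, ← h2]
      ring
    rw [Finset.sum_congr rfl hterm, Finset.sum_add_distrib]
    have h3 : k + 1 - (k + 1) = 0 := by omega
    simp [h3]
    ring
  -- Step 2: split the first RHS sum using Pascal on C(i+1, j)
  have R : ∑ j ∈ range (k + 1 + 1),
        (s - i).choose (k + 1 - j) * (i + 1).choose j * (s + 1 - j).choose (k + 1)
      = (∑ j ∈ range (k + 1 + 1),
          (s - i).choose (k + 1 - j) * i.choose j * (s + 1 - j).choose (k + 1))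
        + ∑ j ∈ range (k + 1),
          (s - i).choose (k - j) * i.choose j * (s - j).choose (k + 1) := by
    rw [Finset.sum_range_succ', Finset.sum_range_succ'
      (f := fun j => (s - i).choose (k + 1 - j) * i.choose j * (s + 1 - j).choose (k + 1))]
    have hterm : ∀ j ∈ range (k + 1),
        (s - i).choose (k + 1 - (j + 1)) * (i + 1).choose (j + 1) * (s + 1 - (j + 1)).choose (k + 1)
        = (s - i).choose (k + 1 - (j + 1)) * i.choose (j + 1) * (s + 1 - (j + 1)).choose (k + 1)
          + (s - i).choose (k - j) * i.choose j * (s - j).choose (k + 1) := by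
      intro j hj
      have h1 : k + 1 - (j + 1) = k - j := by omega
      have h2 : s + 1 - (j + 1) = s - j := by omega
      rw [h1, h2, Nat.choose_succ_succ]
      ring
    rw [Finset.sum_congr rfl hterm, Finset.sum_add_distrib]
    simp only [Nat.choose_zero_right]
    ring
  rw [L, R]
  -- Step 3: termwise Pascal on C(s+1-j, k+1), using C(i,j) = 0 when j > i
  have S : ∀ j ∈ range (k + 1),
      (s - i).choose (k - j) * i.choose j * (s + 1 - j).choose (k + 1)
      = (s - i).choose (k - j) * i.choose j * (s - j).choose (k + 1)
        + (s - i).choose (k - j) * i.choose j * (s - j).choose k := by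
    intro j hj
    by_cases hji : j ≤ i
    · have h1 : s + 1 - j = (s - j) + 1 := by omega
      rw [h1, Nat.choose_succ_succ]
      ring
    · rw [Nat.choose_eq_zero_of_lt (by omega : i < j)]
      ring
  rw [Finset.sum_congr rfl S, Finset.sum_add_distrib]
  ring

/-- for all natural numbers `s, k, i` with `i ≤ s`,
`a(s+1, k+1, i) − a(s+1, k+1, i+1) = a(s, k, i)` (subtraction taken in `ℤ`). -/
theorem aCoeff_succ_sub_succ (s k i : ℕ) (h : i ≤ s) :
    (aCoeff (s + 1) (k + 1) i : ℤ) - (aCoeff (s + 1) (k + 1) (i + 1) : ℤ)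
      = (aCoeff s k i : ℤ) := by
  have := aCoeff_key s k i h
  omega
end

section
/- For s ≥ 1, let M_s be the s×s matrix whose entry in row m and column i (for 1 ≤ m, i ≤ s) is a(s, m−1, i) := Σ_{j≥0} C(s−i, m−1−j)·C(i, j)·C(s−j, m−1). Then det(M_s) ≠ 0 for every s ≥ 1; in fact |det(M_s)| = 1, since det(M₁) = 1 and det(M_s) = ±det(M_{s−1}). -/
/-- The `s × s` matrix `M_s` whose entry in row `m` and column `i` (for `1 ≤ m, i ≤ s`,
here realized with `0`-based indices, so row `m` corresponds to `m−1` and column `i` to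
`i−1`) is `a(s, m−1, i)`. -/
def Mmat (s : ℕ) : Matrix (Fin s) (Fin s) ℤ :=
  Matrix.of fun m i => (aCoeff s m.val (i.val + 1) : ℤ)


/-!
Row `m` of `M_s` is, as a function of the column index `x`, the restriction to `x = 1, …, s`
of a rational polynomial of degree at most `m` whose coefficient of `x ^ m` is `(-1) ^ m / m!`;
the latter amounts to `∑ j, (-1) ^ (m - j) C(m, j) C(s - j, m) = (-1) ^ m`, the `m`-th forward
difference of the degree-`m` polynomial `t ↦ C(s - t, m)`. Writing the transpose of `M_s` as a
Vandermonde matrix times the upper triangular matrix of these coefficients gives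
`det M_s = (∏_{m < s} m!) · ∏_{m < s} (-1) ^ m / m! = ±1`.
-/
open Finset Polynomial Matrix
open scoped Nat

theorem Matrix.det_eval_matrixOfPolynomials_eq_det_vandermonde_mul_prod_coeff {R : Type*}
    [CommRing R] {n : ℕ} (v : Fin n → R) (p : Fin n → R[X])
    (h_deg : ∀ i, (p i).natDegree ≤ i) :
    (of fun i j => (p j).eval (v i)).det = (vandermonde v).det * ∏ i, (p i).coeff i := by
  rw [eval_matrixOfPolynomials_eq_vandermonde_mul_matrixOfPolynomials v p h_deg, det_mul,
    det_of_isUpperTriangular (matrixOfPolynomials_blockTriangular p h_deg)]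
  rfl

theorem Matrix.det_vandermonde_id_eq_prod_factorial {R : Type*} [CommRing R] (n : ℕ) :
    (vandermonde fun i : Fin n ↦ (i : R)).det = ∏ i : Fin n, ((i : ℕ)! : R) := by
  cases n with
  | zero => simp
  | succ n =>
    rw [det_vandermonde_id_eq_superFactorial, ← Nat.prod_range_succ_factorial,
      Fin.prod_univ_eq_prod_range (fun i ↦ (i ! : R)), Nat.cast_prod]

theorem Polynomial.sum_alternating_choose_smul_eval {R : Type*} [CommRing R] (P : R[X]) :
    ∑ k ∈ range (P.natDegree + 1),
        ((-1 : ℤ) ^ (P.natDegree - k) * P.natDegree.choose k) • P.eval (k : R) =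
      P.natDegree ! • P.leadingCoeff := by
  have := congr_fun P.fwdDiff_iter_degree_eq_factorial 0
  rw [fwdDiff_iter_eq_sum_shift] at this
  simpa [nsmul_eq_mul, mul_comm] using this

theorem Polynomial.coeff_comp_C_sub_X {R : Type*} [CommRing R] [Nontrivial R] (p : R[X])
    (a : R) :
    (p.comp (C a - X)).coeff p.natDegree = (-1) ^ p.natDegree * p.leadingCoeff := by
  have hq : (C a - X).natDegree = 1 := by
    rw [← neg_sub, natDegree_neg, natDegree_X_sub_C]
  have hlc : (C a - X).leadingCoeff = -1 := by
    rw [← neg_sub, leadingCoeff_neg, leadingCoeff_X_sub_C]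
  have := coeff_comp_degree_mul_degree (p := p) (by rw [hq]; exact one_ne_zero)
  rwa [hq, mul_one, hlc, mul_comm] at this

noncomputable def choosePoly (k : ℕ) : ℚ[X] := C (k ! : ℚ)⁻¹ * descPochhammer ℚ k

theorem eval_choosePoly (n k : ℕ) : (choosePoly k).eval (n : ℚ) = n.choose k := by
  rw [choosePoly, eval_mul, eval_C, Nat.cast_choose_eq_descPochhammer_div, inv_mul_eq_div]

theorem natDegree_choosePoly (k : ℕ) : (choosePoly k).natDegree = k := by
  rw [choosePoly, natDegree_C_mul (by positivity), descPochhammer_natDegree]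

theorem leadingCoeff_choosePoly (k : ℕ) : (choosePoly k).leadingCoeff = (k ! : ℚ)⁻¹ := by
  rw [choosePoly, leadingCoeff_mul, leadingCoeff_C, (monic_descPochhammer ℚ k).leadingCoeff,
    mul_one]

theorem eval_choosePoly_comp_C_sub_X {n s k : ℕ} (hn : n ≤ s) :
    ((choosePoly k).comp (C (s : ℚ) - X)).eval (n : ℚ) = (s - n).choose k := by
  rw [eval_comp, eval_sub, eval_C, eval_X, ← Nat.cast_sub hn, eval_choosePoly]

theorem natDegree_choosePoly_comp_C_sub_X (k : ℕ) (a : ℚ) :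
    ((choosePoly k).comp (C a - X)).natDegree = k := by
  rw [natDegree_comp, natDegree_choosePoly, ← neg_sub, natDegree_neg, natDegree_X_sub_C, mul_one]

theorem coeff_choosePoly_comp_C_sub_X (k : ℕ) (a : ℚ) :
    ((choosePoly k).comp (C a - X)).coeff k = (-1) ^ k * (k ! : ℚ)⁻¹ := by
  simpa only [natDegree_choosePoly, leadingCoeff_choosePoly] using
    coeff_comp_C_sub_X (choosePoly k) a

theorem coeff_choosePoly_self (k : ℕ) : (choosePoly k).coeff k = (k ! : ℚ)⁻¹ := by
  simpa only [leadingCoeff, natDegree_choosePoly] using leadingCoeff_choosePoly k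

theorem sum_alternating_choose_mul_choose {m s : ℕ} (hm : m ≤ s) :
    ∑ j ∈ range (m + 1), (-1 : ℚ) ^ (m - j) * m.choose j * (s - j).choose m = (-1) ^ m := by
  set Q := (choosePoly m).comp (C (s : ℚ) - X)
  have hdeg : Q.natDegree = m := natDegree_choosePoly_comp_C_sub_X m s
  have key := Q.sum_alternating_choose_smul_eval
  rw [leadingCoeff, hdeg, coeff_choosePoly_comp_C_sub_X, nsmul_eq_mul, mul_left_comm,
    mul_inv_cancel₀ (by positivity), mul_one] at key
  rw [← key]
  refine sum_congr rfl fun j hj => ?_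
  rw [eval_choosePoly_comp_C_sub_X ((mem_range_succ_iff.mp hj).trans hm), zsmul_eq_mul]
  push_cast
  ring

noncomputable def aPoly (s m : ℕ) : ℚ[X] :=
  ∑ j ∈ range (m + 1),
    C ((s - j).choose m : ℚ) * ((choosePoly (m - j)).comp (C (s : ℚ) - X) * choosePoly j)

theorem eval_aPoly {s m x : ℕ} (hx : x ≤ s) : (aPoly s m).eval (x : ℚ) = aCoeff s m x := by
  simp only [aPoly, aCoeff, eval_finsetSum, eval_mul, eval_C, eval_choosePoly_comp_C_sub_X hx,
    eval_choosePoly]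
  push_cast
  exact sum_congr rfl fun j _ => by ring

theorem natDegree_aPoly_le (s m : ℕ) : (aPoly s m).natDegree ≤ m := by
  refine natDegree_sum_le_of_forall_le _ _ fun j hj => ?_
  refine (natDegree_C_mul_le _ _).trans (natDegree_mul_le.trans ?_)
  rw [natDegree_choosePoly_comp_C_sub_X, natDegree_choosePoly]
  have := mem_range_succ_iff.mp hj
  omega

theorem coeff_aPoly {s m : ℕ} (hm : m ≤ s) :
    (aPoly s m).coeff m = (-1) ^ m * (m ! : ℚ)⁻¹ := by
  have hterm : ∀ j ∈ range (m + 1),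
      (C ((s - j).choose m : ℚ) * ((choosePoly (m - j)).comp (C (s : ℚ) - X) *
        choosePoly j)).coeff m =
        (m ! : ℚ)⁻¹ * ((-1) ^ (m - j) * m.choose j * (s - j).choose m) := by
    intro j hj
    have hjm := mem_range_succ_iff.mp hj
    have hprod := coeff_mul_add_eq_of_natDegree_le
      (natDegree_choosePoly_comp_C_sub_X (m - j) (s : ℚ)).le (natDegree_choosePoly j).le
    rw [Nat.sub_add_cancel hjm, coeff_choosePoly_comp_C_sub_X, coeff_choosePoly_self] at hprod
    rw [coeff_C_mul, hprod, Nat.cast_choose ℚ hjm]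
    field_simp
  rw [aPoly, finsetSum_coeff, sum_congr rfl hterm, ← mul_sum,
    sum_alternating_choose_mul_choose hm, mul_comm]

theorem Mmat_map_intCast_transpose (s : ℕ) :
    ((Mmat s).map (Int.cast : ℤ → ℚ))ᵀ =
      of fun i m : Fin s => (aPoly s m).eval ((i : ℚ) + 1) := by
  ext i m
  rw [transpose_apply, map_apply, of_apply, Mmat, of_apply, ← Nat.cast_succ, eval_aPoly i.isLt]
  rfl

theorem intCast_det_Mmat (s : ℕ) : ((Mmat s).det : ℚ) = ∏ m : Fin s, (-1) ^ (m : ℕ) := by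
  rw [Int.cast_det, ← det_transpose, Mmat_map_intCast_transpose,
    det_eval_matrixOfPolynomials_eq_det_vandermonde_mul_prod_coeff _ _ (natDegree_aPoly_le s ·),
    det_vandermonde_add, det_vandermonde_id_eq_prod_factorial, ← prod_mul_distrib]
  refine prod_congr rfl fun m _ => ?_
  rw [coeff_aPoly m.isLt.le]
  field_simp

theorem Mmat_det_ne_zero_general (s : ℕ) :
    (Mmat s).det ≠ 0 ∧ (Mmat s).det.natAbs = 1 := by
  have hdet : (Mmat s).det = ∏ m : Fin s, (-1) ^ (m : ℕ) := by
    exact_mod_cast intCast_det_Mmat s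
  have habs : (Mmat s).det.natAbs = 1 := by simp [hdet, prod_pow_eq_pow_sum, Int.natAbs_pow]
  exact ⟨fun h => by simp [h] at habs, habs⟩

/-- `det M_s ≠ 0` for every `s ≥ 1`; in fact `|det M_s| = 1`. -/
theorem Mmat_det_ne_zero (s : ℕ) (hs : 1 ≤ s) :
    (Mmat s).det ≠ 0 ∧ (Mmat s).det.natAbs = 1 :=
  Mmat_det_ne_zero_general s
end
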